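/- arXiv:2411.12333 — 9 statements merged into one kernel-verified Lean document; each statement's English description precedes it below -/
import Mathlib

section
/- Let V be a commutative, unital, affine quantale and F a Set endofunctor. If τ, τ' : FV → V are well-behaved modalities for F and τ_Id : V → V is a well-behaved modality for the identity functor, then the modalities τ_Id ∘ τ, the pointwise tensor τ ⊗ τ' (sending x ∈ FV to τ(x) ⊗ τ'(x)), and the pointwise meet τ ∧ τ' (sending x ∈ FV to τ(x) ∧ τ'(x)) are again well-behaved modalities for F. -/
universe u

/-- A commutative, unital, affine quantale: a complete lattice with a commutative,
associative tensor distributing over arbitrary joins, whose unit is the top element. -/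
class AffineQuantale (V : Type u) extends CompleteLattice V where
  tensor : V → V → V
  tensor_comm : ∀ x y : V, tensor x y = tensor y x
  tensor_assoc : ∀ x y z : V, tensor (tensor x y) z = tensor x (tensor y z)
  tensor_top : ∀ x : V, tensor x ⊤ = x
  tensor_sSup : ∀ (x : V) (S : Set V), tensor x (sSup S) = ⨆ y ∈ S, tensor x y

namespace AffineQuantale

variable {V : Type u} [AffineQuantale V]

/-- The internal hom `[y,z] = ⋁ {x | x ⊗ y ≤ z}`. -/
def hom (y z : V) : V := sSup {x : V | tensor x y ≤ z}

/-- The Euclidean pseudometric `d_e(x,y) = [x,y] ⊓ [y,x]`. -/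
def de (x y : V) : V := hom x y ⊓ hom y x

end AffineQuantale

/-- A `Set` endofunctor. -/
structure SetFunctor : Type (u + 1) where
  obj : Type u → Type u
  map : ∀ {X Y : Type u}, (X → Y) → obj X → obj Y
  map_id : ∀ {X : Type u} (t : obj X), map (fun x => x) t = t
  map_comp : ∀ {X Y Z : Type u} (f : X → Y) (g : Y → Z) (t : obj X),
    map (fun x => g (f x)) t = map g (map f t)

namespace SetFunctor

open AffineQuantale

/-- Preservation of weak pullbacks. -/
def PreservesWeakPullbacks (F : SetFunctor.{u}) : Prop :=
  ∀ {X Y Z : Type u} (f : X → Z) (g : Y → Z) (a : F.obj X) (b : F.obj Y),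
    F.map f a = F.map g b →
    ∃ c : F.obj {p : X × Y // f p.1 = g p.2},
      F.map (fun p => p.1.1) c = a ∧ F.map (fun p => p.1.2) c = b

variable {V : Type u} [AffineQuantale V]

/-- A `V`-pseudometric: reflexive, symmetric, transitive map `X × X → V`. -/
def IsPMet {X : Type u} (d : X → X → V) : Prop :=
  (∀ x, d x x = ⊤) ∧ (∀ x y, d x y = d y x) ∧
    ∀ x y z, tensor (d x z) (d z y) ≤ d x y

/-- A morphism of `V`-pseudometrics. -/
def IsMor {X Y : Type u} (dX : X → X → V) (dY : Y → Y → V) (f : X → Y) : Prop :=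
  ∀ x y, dX x y ≤ dY (f x) (f y)

/-- A well-behaved modality `τ : F V → V`. -/
def WellBehaved (F : SetFunctor.{u}) (τ : F.obj V → V) : Prop :=
  (∀ {X : Type u} (p q : X → V), (∀ x, p x ≤ q x) →
      ∀ t : F.obj X, τ (F.map p t) ≤ τ (F.map q t)) ∧
  (∀ {X : Type u} (p q : X → V) (t : F.obj X),
      tensor (τ (F.map p t)) (τ (F.map q t))
        ≤ τ (F.map (fun x => tensor (p x) (q x)) t)) ∧
  Set.range (F.map (fun x : ({⊤} : Set V) => (x : V))) = {t | τ t = ⊤}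

/-- The set of couplings of `t₁` and `t₂`. -/
def couplings (F : SetFunctor.{u}) {X : Type u} (t₁ t₂ : F.obj X) :
    Set (F.obj (X × X)) :=
  {t | F.map Prod.fst t = t₁ ∧ F.map Prod.snd t = t₂}

/-- The coupling-based lifting of `F` along the modality `τ`. -/
noncomputable def couplingLift (F : SetFunctor.{u}) (τ : F.obj V → V) {X : Type u}
    (d : X → X → V) (t₁ t₂ : F.obj X) : V :=
  ⨆ t ∈ couplings F t₁ t₂, τ (F.map (fun p => d p.1 p.2) t)

/-- The codensity lifting of `F` along the set `Γ` of modalities. -/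
noncomputable def codensityLift (F : SetFunctor.{u}) (Γ : Set (F.obj V → V)) {X : Type u}
    (d : X → X → V) (t₁ t₂ : F.obj X) : V :=
  ⨅ τ' ∈ Γ, ⨅ f ∈ {f : X → V | IsMor d de f}, de (τ' (F.map f t₁)) (τ' (F.map f t₂))

/-- A correspondence `⟨F, τ, Γ⟩`: the coupling-based and codensity liftings coincide. -/
def Corresp (F : SetFunctor.{u}) (τ : F.obj V → V) (Γ : Set (F.obj V → V)) : Prop :=
  ∀ {X : Type u} (d : X → X → V), IsPMet d →
    ∀ t₁ t₂ : F.obj X, couplingLift F τ d t₁ t₂ = codensityLift F Γ d t₁ t₂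

end SetFunctor

open SetFunctor AffineQuantale

/-- The identity `Set` endofunctor. -/
def idF : SetFunctor.{u} :=
  ⟨fun X => X, fun f => f, fun _ => rfl, fun _ _ _ => rfl⟩

section Aux

variable {V : Type u} [AffineQuantale V]

lemma tensor_le_tensor_right (x : V) {y z : V} (h : y ≤ z) :
    tensor x y ≤ tensor x z := by
  have hz : sSup ({y, z} : Set V) = z := by
    rw [sSup_insert, sSup_singleton, sup_eq_right.mpr h]
  calc tensor x y ≤ ⨆ w ∈ ({y, z} : Set V), tensor x w :=
        le_biSup _ (by simp)
    _ = tensor x (sSup ({y, z} : Set V)) := (tensor_sSup x _).symm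
    _ = tensor x z := by rw [hz]

lemma tensor_mono {a b c d : V} (h1 : a ≤ b) (h2 : c ≤ d) :
    tensor a c ≤ tensor b d := by
  refine le_trans (tensor_le_tensor_right a h2) ?_
  rw [tensor_comm a d, tensor_comm b d]
  exact tensor_le_tensor_right d h1

lemma tensor_le_left (a b : V) : tensor a b ≤ a := by
  calc tensor a b ≤ tensor a ⊤ := tensor_le_tensor_right a le_top
    _ = a := tensor_top a

lemma tensor_eq_top_iff {a b : V} : tensor a b = ⊤ ↔ a = ⊤ ∧ b = ⊤ := by
  constructor
  · intro h
    constructor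
    · exact top_le_iff.mp (h ▸ tensor_le_left a b)
    · exact top_le_iff.mp (h ▸ (tensor_comm a b ▸ tensor_le_left b a))
  · rintro ⟨rfl, rfl⟩
    exact tensor_top ⊤

lemma tensor_tensor_tensor_comm (a b c d : V) :
    tensor (tensor a b) (tensor c d) = tensor (tensor a c) (tensor b d) := by
  rw [tensor_assoc a b, ← tensor_assoc b c d, tensor_comm b c,
    tensor_assoc c b d, ← tensor_assoc a c (tensor b d)]

end Aux

/-- Well-behaved modalities are closed under post-composition with a
well-behaved modality for the identity functor, pointwise tensor, and pointwise meet. -/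
theorem wellBehaved_closure {V : Type u} [AffineQuantale V] (F : SetFunctor.{u})
    (τ τ' : F.obj V → V) (τId : V → V)
    (hτ : WellBehaved F τ) (hτ' : WellBehaved F τ') (hτId : WellBehaved idF τId) :
    WellBehaved F (fun x => τId (τ x)) ∧
    WellBehaved F (fun x => tensor (τ x) (τ' x)) ∧
    WellBehaved F (fun x => τ x ⊓ τ' x) := by
  obtain ⟨h1, h2, h3⟩ := hτ
  obtain ⟨h1', h2', h3'⟩ := hτ'
  -- facts about τId
  have hId_mono : ∀ a b : V, a ≤ b → τId a ≤ τId b := fun a b h =>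
    hτId.1 (fun _ : V => a) (fun _ => b) (fun _ => h) (⊤ : V)
  have hId_tensor : ∀ a b : V, tensor (τId a) (τId b) ≤ τId (tensor a b) :=
    fun a b => hτId.2.1 (fun _ : V => a) (fun _ => b) (⊤ : V)
  have hId_top : ∀ a : V, τId a = ⊤ ↔ a = ⊤ := by
    intro a
    have hr : Set.range (idF.map (fun x : ({⊤} : Set V) => (x : V)))
        = ({⊤} : Set V) := Subtype.range_coe
    have h := Set.ext_iff.mp (hr ▸ hτId.2.2) a
    exact h.symm
  refine ⟨⟨?_, ?_, ?_⟩, ⟨?_, ?_, ?_⟩, ⟨?_, ?_, ?_⟩⟩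
  · intro X p q hpq t
    exact hId_mono _ _ (h1 p q hpq t)
  · intro X p q t
    exact le_trans (hId_tensor _ _) (hId_mono _ _ (h2 p q t))
  · rw [h3]; ext t; simp [hId_top]
  · intro X p q hpq t
    exact tensor_mono (h1 p q hpq t) (h1' p q hpq t)
  · intro X p q t
    calc tensor (tensor (τ (F.map p t)) (τ' (F.map p t)))
          (tensor (τ (F.map q t)) (τ' (F.map q t)))
        = tensor (tensor (τ (F.map p t)) (τ (F.map q t)))
          (tensor (τ' (F.map p t)) (τ' (F.map q t))) :=
          tensor_tensor_tensor_comm _ _ _ _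
      _ ≤ _ := tensor_mono (h2 p q t) (h2' p q t)
  · have hset : {t : F.obj V | tensor (τ t) (τ' t) = ⊤}
        = {t : F.obj V | τ t = ⊤} ∩ {t : F.obj V | τ' t = ⊤} := by
      ext t; simp [tensor_eq_top_iff, Set.mem_inter_iff]
    show Set.range _ = {t : F.obj V | tensor (τ t) (τ' t) = ⊤}
    rw [hset, ← h3, ← h3', Set.inter_self]
  · intro X p q hpq t
    exact inf_le_inf (h1 p q hpq t) (h1' p q hpq t)
  · intro X p q t
    refine le_inf ?_ ?_
    · exact le_trans (tensor_mono inf_le_left inf_le_left) (h2 p q t)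
    · exact le_trans (tensor_mono inf_le_right inf_le_right) (h2' p q t)
  · have hset : {t : F.obj V | τ t ⊓ τ' t = ⊤}
        = {t : F.obj V | τ t = ⊤} ∩ {t : F.obj V | τ' t = ⊤} := by
      ext t; simp [inf_eq_top_iff, Set.mem_inter_iff]
    show Set.range _ = {t : F.obj V | τ t ⊓ τ' t = ⊤}
    rw [hset, ← h3, ← h3', Set.inter_self]
end

section
/- Let V be a commutative, unital, affine quantale, F a Set endofunctor preserving weak pullbacks, and τ : FV → V a well-behaved modality for F. Then for every V-pseudometric d on a set X and all t₁, t₂ ∈ FX, the coupling-based lifting is below the codensity lifting: F↓_τ(d)(t₁,t₂) ≤ F↑_{{τ}}(d)(t₁,t₂). -/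
universe u

open SetFunctor AffineQuantale

section Aux

variable {V : Type u} [AffineQuantale V]

lemma tensor_mono_left {a b : V} (h : a ≤ b) (c : V) : tensor a c ≤ tensor b c := by
  have hb : b = sSup ({a, b} : Set V) := by rw [sSup_pair, sup_eq_right.mpr h]
  calc tensor a c = tensor c a := tensor_comm a c
    _ ≤ ⨆ y ∈ ({a, b} : Set V), tensor c y :=
        le_biSup _ (Set.mem_insert a {b})
    _ = tensor c (sSup ({a, b} : Set V)) := (tensor_sSup c _).symm
    _ = tensor b c := by rw [← hb, tensor_comm]

lemma tensor_hom_le (y z : V) : tensor (hom y z) y ≤ z := by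
  rw [tensor_comm, hom, tensor_sSup]
  exact iSup₂_le fun x hx => by rw [tensor_comm]; exact hx

lemma le_hom {a y z : V} (h : tensor a y ≤ z) : a ≤ hom y z := le_sSup h

end Aux

/-- The coupling-based lifting is always below the codensity lifting
along the same well-behaved modality. -/
theorem couplingLift_le_codensityLift {V : Type u} [AffineQuantale V] (F : SetFunctor.{u})
    (hF : PreservesWeakPullbacks F) (τ : F.obj V → V) (hτ : WellBehaved F τ)
    {X : Type u} (d : X → X → V) (hd : IsPMet d) (t₁ t₂ : F.obj X) :
    couplingLift F τ d t₁ t₂ ≤ codensityLift F {τ} d t₁ t₂ := by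
  apply iSup₂_le
  rintro t ⟨ht1, ht2⟩
  apply le_iInf₂
  rintro τ' rfl
  apply le_iInf₂
  intro f hf
  obtain ⟨h1, h2, _⟩ := hτ
  have e1 : F.map f t₁ = F.map (fun p : X × X => f p.1) t := by
    rw [← ht1, ← F.map_comp]
  have e2 : F.map f t₂ = F.map (fun p : X × X => f p.2) t := by
    rw [← ht2, ← F.map_comp]
  have key : ∀ g h : X × X → X,
      (∀ p : X × X, d p.1 p.2 ≤ hom (f (g p)) (f (h p))) →
      tensor (τ' (F.map (fun p : X × X => d p.1 p.2) t))
        (τ' (F.map (fun p : X × X => f (g p)) t))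
        ≤ τ' (F.map (fun p : X × X => f (h p)) t) := by
    intro g h hp
    refine le_trans (h2 _ _ t) (h1 _ _ (fun p => ?_) t)
    calc tensor (d p.1 p.2) (f (g p))
        ≤ tensor (hom (f (g p)) (f (h p))) (f (g p)) :=
          tensor_mono_left (hp p) _
      _ ≤ f (h p) := tensor_hom_le _ _
  unfold AffineQuantale.de
  apply le_inf
  · apply le_hom
    rw [e1, e2]
    exact key Prod.fst Prod.snd fun p => (hf p.1 p.2).trans inf_le_left
  · apply le_hom
    rw [e1, e2]
    exact key Prod.snd Prod.fst fun p => (hf p.1 p.2).trans inf_le_right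
end

section
/- Let V be a commutative, unital, affine quantale and (Fᵢ)ᵢ a family of weak-pullback preserving Set endofunctors with correspondences ⟨Fᵢ, τᵢ, Γᵢ⟩. Then there is a correspondence ⟨∐Fᵢ, [τᵢ], ⋃ᵢ Γ̄ᵢ⟩ for the coproduct functor ∐Fᵢ, where [τᵢ] : (∐Fᵢ)V → V is the cotupling of the τᵢ, and Γ̄ᵢ = { τ̄ | τ ∈ Γᵢ } ∪ {τ_{⊤,i}}, with τ̄(x) = τ(y) if x = κᵢ(y) for some y ∈ FᵢV and τ̄(x) = ⊤ otherwise, and τ_{⊤,i}(x) = ⊤ if x = κᵢ(y) for some y ∈ FᵢV and τ_{⊤,i}(x) = ⊥ otherwise (κⱼ being the j-th coprojection). -/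
universe u

open SetFunctor AffineQuantale

/-- The coproduct of a family of `Set` endofunctors. -/
def coprodF {I : Type u} (F : I → SetFunctor.{u}) : SetFunctor.{u} where
  obj X := Σ i, (F i).obj X
  map f t := ⟨t.1, (F t.1).map f t.2⟩
  map_id t := by cases t with | mk i x => exact congrArg _ ((F i).map_id x)
  map_comp f g t := by cases t with | mk i x => exact congrArg _ ((F i).map_comp f g x)

variable {V : Type u} [AffineQuantale V]

/-- The cotupling `[τᵢ]` of a family of modalities. -/
def cotuple {I : Type u} (F : I → SetFunctor.{u}) (τ : ∀ i, (F i).obj V → V) :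
    (Σ j, (F j).obj V) → V :=
  fun x => τ x.1 x.2

/-- The extension `τ̄` of a modality for `F i` to the coproduct: `τ̄(κᵢ y) = τ y`,
and `τ̄ x = ⊤` on the other components. -/
noncomputable def extendMod {I : Type u} [DecidableEq I] (F : I → SetFunctor.{u}) (i : I)
    (τ : (F i).obj V → V) : (Σ j, (F j).obj V) → V :=
  fun x => if h : x.1 = i then τ (h ▸ x.2) else ⊤

/-- The modality `τ_{⊤,i}` on the coproduct: `⊤` on the `i`-th component, `⊥` elsewhere. -/
noncomputable def tauTopMod {I : Type u} [DecidableEq I] (F : I → SetFunctor.{u}) (i : I) :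
    (Σ j, (F j).obj V) → V :=
  fun x => if x.1 = i then ⊤ else ⊥

lemma top_tensor' (x : V) : tensor (⊤ : V) x = x := by
  rw [tensor_comm, tensor_top]

lemma hom_self' (x : V) : hom x x = (⊤ : V) := by
  apply le_antisymm le_top
  apply le_sSup
  simp [Set.mem_setOf_eq, top_tensor']

lemma de_self' (x : V) : de x x = (⊤ : V) := by
  simp [de, hom_self']

lemma de_top_bot_le : de (⊤ : V) (⊥ : V) ≤ ⊥ := by
  refine le_trans inf_le_left ?_
  apply sSup_le
  intro y hy
  simpa [tensor_top] using hy

lemma extendMod_self {I : Type u} [DecidableEq I] (F : I → SetFunctor.{u}) (i : I)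
    (τ : (F i).obj V → V) (u : (F i).obj V) :
    extendMod F i τ ⟨i, u⟩ = τ u := dif_pos rfl

lemma extendMod_ne {I : Type u} [DecidableEq I] (F : I → SetFunctor.{u}) {i j : I}
    (h : j ≠ i) (τ : (F i).obj V → V) (u : (F j).obj V) :
    extendMod F i τ ⟨j, u⟩ = ⊤ := dif_neg h

/-- Correspondences are closed under coproducts. -/
theorem corresp_coprod {I : Type u} [DecidableEq I] (F : I → SetFunctor.{u})
    (hwpb : ∀ i, PreservesWeakPullbacks (F i))
    (τ : ∀ i, (F i).obj V → V) (hwb : ∀ i, WellBehaved (F i) (τ i))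
    (Γ : ∀ i, Set ((F i).obj V → V))
    (hcorr : ∀ i, Corresp (F i) (τ i) (Γ i)) :
    Corresp (coprodF F) (cotuple F τ)
      (⋃ i, (extendMod F i '' Γ i ∪ {tauTopMod F i})) := by
  intro X d hd t₁ t₂
  obtain ⟨i, a⟩ := t₁
  obtain ⟨j, b⟩ := t₂
  by_cases hij : i = j
  · subst hij
    have stepA : couplingLift (coprodF F) (cotuple F τ) d ⟨i, a⟩ ⟨i, b⟩
        = couplingLift (F i) (τ i) d a b := by
      apply le_antisymm
      · apply iSup₂_le
        rintro ⟨k, u⟩ ⟨h1, h2⟩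
        obtain ⟨hk, hu⟩ := Sigma.mk.inj_iff.mp h1
        subst hk
        have ha : (F k).map Prod.fst u = a := eq_of_heq hu
        have hb : (F k).map Prod.snd u = b :=
          eq_of_heq (Sigma.mk.inj_iff.mp h2).2
        exact le_iSup₂ (f := fun u (_ : u ∈ couplings (F k) a b) =>
          τ k ((F k).map (fun p => d p.1 p.2) u)) u ⟨ha, hb⟩
      · apply iSup₂_le
        intro u ⟨h1, h2⟩
        have hm : (⟨i, u⟩ : Σ k, (F k).obj (X × X)) ∈
            couplings (coprodF F) (⟨i, a⟩ : Σ k, (F k).obj X) ⟨i, b⟩ :=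
          ⟨congrArg (Sigma.mk i) h1, congrArg (Sigma.mk i) h2⟩
        exact le_iSup₂ (f := fun t (_ : t ∈ couplings (coprodF F)
            (⟨i, a⟩ : Σ k, (F k).obj X) ⟨i, b⟩) =>
            cotuple F τ ((coprodF F).map (fun p => d p.1 p.2) t))
            (⟨i, u⟩ : Σ k, (F k).obj (X × X)) hm
    rw [stepA, hcorr i d hd a b]
    apply le_antisymm
    · apply le_iInf₂
      intro τ' hτ'
      apply le_iInf₂
      intro f hf
      obtain ⟨k, hk⟩ := Set.mem_iUnion.mp hτ'
      rcases hk with ⟨σ, hσ, rfl⟩ | hk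
      · by_cases hki : k = i
        · subst hki
          simp only [coprodF, extendMod_self]
          exact iInf₂_le_of_le σ hσ (iInf₂_le f hf)
        · have : ∀ u : (F i).obj V, extendMod F k σ ⟨i, u⟩ = ⊤ :=
            fun u => extendMod_ne F (fun h => hki h.symm) σ u
          simp only [coprodF]
          rw [this, this, de_self']
          exact le_top
      · have hk : τ' = tauTopMod F k := hk
        subst hk
        simp only [coprodF, tauTopMod]
        by_cases hik : i = k <;> simp [hik, de_self']
    · apply le_iInf₂
      intro σ hσ
      apply le_iInf₂
      intro f hf
      refine le_trans (iInf₂_le (extendMod F i σ) ?_) ?_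
      · exact Set.mem_iUnion.mpr ⟨i, Or.inl ⟨σ, hσ, rfl⟩⟩
      · refine le_trans (iInf₂_le f hf) ?_
        simp [coprodF, extendMod_self]
  · -- different components: both sides are ⊥
    have hleft : couplingLift (coprodF F) (cotuple F τ) d ⟨i, a⟩ ⟨j, b⟩ = ⊥ := by
      apply le_antisymm _ bot_le
      apply iSup₂_le
      rintro ⟨k, u⟩ ⟨h1, h2⟩
      exact absurd ((Sigma.mk.inj_iff.mp h1).1.symm.trans
        (Sigma.mk.inj_iff.mp h2).1) hij
    have hright : codensityLift (coprodF F)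
        (⋃ i, (extendMod F i '' Γ i ∪ {tauTopMod F i})) d
        (⟨i, a⟩ : Σ k, (F k).obj X) ⟨j, b⟩ = ⊥ := by
      apply le_antisymm _ bot_le
      refine le_trans (iInf₂_le (tauTopMod F i)
        (Set.mem_iUnion.mpr ⟨i, Or.inr rfl⟩)) ?_
      refine le_trans (iInf₂_le (fun _ => (⊤ : V)) ?_) ?_
      · intro x y; simp [de_self']
      · simp only [coprodF, tauTopMod]
        simp only [Ne.symm hij, if_true, if_false, reduceIte]
        exact de_top_bot_le
    rw [hleft, hright]
end

section
/- Let V be a commutative, unital, affine quantale and (Fᵢ)ᵢ a family of weak-pullback preserving Set endofunctors. If there is a correspondence ⟨∐Fᵢ, τ, Γ⟩ for the coproduct functor, then for each index i there is a correspondence ⟨Fᵢ, τ∘κᵢ, Γ∘κᵢ⟩, where κᵢ : FᵢV → (∐Fⱼ)V is the i-th coprojection and Γ∘κᵢ = { τ'∘κᵢ | τ' ∈ Γ }. -/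
universe u

open SetFunctor AffineQuantale

variable {V : Type u} [AffineQuantale V]

/-- A correspondence for a coproduct restricts to correspondences for
each of its components, precomposing the modalities with the coprojection. -/
theorem corresp_of_coprod_corresp {I : Type u} (F : I → SetFunctor.{u})
    (hwpb : ∀ i, PreservesWeakPullbacks (F i))
    (τ : (Σ j, (F j).obj V) → V) (hwb : WellBehaved (coprodF F) τ)
    (Γ : Set ((Σ j, (F j).obj V) → V)) (hcorr : Corresp (coprodF F) τ Γ) (i : I) :
    Corresp (F i) (fun y => τ ⟨i, y⟩)
      ((fun τ' : (Σ j, (F j).obj V) → V => fun y : (F i).obj V => τ' ⟨i, y⟩) '' Γ) := by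
  
  intro X d hd t₁ t₂
  have h1 : couplingLift (F i) (fun y => τ ⟨i, y⟩) d t₁ t₂
      = couplingLift (coprodF F) τ d ⟨i, t₁⟩ ⟨i, t₂⟩ := by
    apply le_antisymm
    · refine iSup₂_le fun t ht => ?_
      exact le_iSup₂_of_le (⟨i, t⟩ : Σ j, (F j).obj (X × X))
        ⟨congrArg (Sigma.mk i) ht.1, congrArg (Sigma.mk i) ht.2⟩ le_rfl
    · refine iSup₂_le fun t ht => ?_
      obtain ⟨j, s⟩ := t
      obtain ⟨h1, h2⟩ := ht
      injection h1 with hj h1'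
      subst hj
      injection h2 with hj2 h2'
      exact le_iSup₂_of_le s ⟨eq_of_heq h1', h2'⟩ le_rfl
  have h2 : codensityLift (F i)
      ((fun τ' : (Σ j, (F j).obj V) → V => fun y : (F i).obj V => τ' ⟨i, y⟩) '' Γ) d t₁ t₂
      = codensityLift (coprodF F) Γ d ⟨i, t₁⟩ ⟨i, t₂⟩ := by
    unfold codensityLift
    rw [iInf_image]
    rfl
  rw [h1, h2]; exact hcorr d hd _ _
end

section
/- Let V be a commutative, unital, affine quantale, and let ⟨F, τ_F, Γ_F⟩ and ⟨G, τ_G, Γ_G⟩ be correspondences for weak-pullback preserving Set endofunctors F and G. If either (1) F and G have finite couplings (the set Ω(t₁,t₂) is finite for all t₁,t₂) and V is distributive, i.e. (x∨z)∧(y∨z) = (x∧y)∨z for all x,y,z ∈ V, or (2) V is join-infinite distributive, i.e. x ∧ ⋁S = ⋁{x∧s | s∈S} for all x ∈ V and S ⊆ V, then there is a correspondence ⟨F×G, (τ_F∘π₁)∧(τ_G∘π₂), (Γ_F∘π₁) ∪ (Γ_G∘π₂)⟩ for the product functor F×G, where π₁, π₂ are the projections of (F×G)V = FV × GV and ∧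 is taken pointwise. -/
universe u

open SetFunctor AffineQuantale

/-- The binary product of two `Set` endofunctors. -/
def prod2F (F G : SetFunctor.{u}) : SetFunctor.{u} where
  obj X := F.obj X × G.obj X
  map f t := (F.map f t.1, G.map f t.2)
  map_id t := by cases t with | mk a b => show (_, _) = _; rw [F.map_id, G.map_id]
  map_comp f g t := by cases t with | mk a b => show (_, _) = _; rw [F.map_comp, G.map_comp]

/-- A functor has finite couplings when every set of couplings is finite. -/
def HasFiniteCouplings (F : SetFunctor.{u}) : Prop :=
  ∀ (X : Type u) (t₁ t₂ : F.obj X), (couplings F t₁ t₂).Finite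


section Aux
variable {V : Type u} [CompleteLattice V]

lemma aux_biSup_prodSet {α β : Type u} (A : Set α) (B : Set β) (h : α → β → V) :
    ⨆ p ∈ A ×ˢ B, h p.1 p.2 = ⨆ s ∈ A, ⨆ u ∈ B, h s u := by
  apply le_antisymm
  · exact iSup₂_le fun p hp => le_iSup₂_of_le p.1 hp.1 (le_iSup₂_of_le p.2 hp.2 le_rfl)
  · exact iSup₂_le fun s hs => iSup₂_le fun u hu => le_iSup₂_of_le (s, u) ⟨hs, hu⟩ le_rfl

lemma aux_inf_distrib (hD : ∀ x y z : V, (x ⊔ z) ⊓ (y ⊔ z) = (x ⊓ y) ⊔ z)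
    (a b c : V) : a ⊓ (b ⊔ c) = a ⊓ b ⊔ a ⊓ c := by
  have hsup : ∀ z x y : V, z ⊔ x ⊓ y = (z ⊔ x) ⊓ (z ⊔ y) := by
    intro z x y
    rw [sup_comm z x, sup_comm z y, hD, sup_comm]
  have h1 : a ⊓ b ⊔ a ⊓ c = (a ⊓ b ⊔ a) ⊓ (a ⊓ b ⊔ c) := hsup _ _ _
  rw [show a ⊓ b ⊔ a = a from sup_eq_right.mpr inf_le_left, sup_comm (a ⊓ b) c,
    hsup c a b, ← inf_assoc, show a ⊓ (c ⊔ a) = a from inf_eq_left.mpr le_sup_right,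
    sup_comm c b] at h1
  exact h1.symm

lemma aux_inf_sSup_finite (hD : ∀ x y z : V, (x ⊔ z) ⊓ (y ⊔ z) = (x ⊓ y) ⊔ z)
    (x : V) {S : Set V} (hS : S.Finite) : x ⊓ sSup S = ⨆ s ∈ S, x ⊓ s := by
  refine Set.Finite.induction_on S hS (by simp) ?_
  intro a S _ _ ih
  rw [sSup_insert, aux_inf_distrib hD, ih, iSup_insert]

lemma aux_inf_biSup {α : Type u} (A : Set α) (f : α → V) (x : V)
    (h : x ⊓ sSup (f '' A) = ⨆ s ∈ f '' A, x ⊓ s) :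
    x ⊓ (⨆ s ∈ A, f s) = ⨆ s ∈ A, x ⊓ f s := by
  rw [sSup_image, iSup_image] at h
  exact h

lemma aux_sup_inf_sup {α β : Type u} (A : Set α) (B : Set β) (f : α → V) (g : β → V)
    (hA : ∀ x : V, x ⊓ (⨆ s ∈ A, f s) = ⨆ s ∈ A, x ⊓ f s)
    (hB : ∀ x : V, x ⊓ (⨆ u ∈ B, g u) = ⨆ u ∈ B, x ⊓ g u) :
    (⨆ s ∈ A, f s) ⊓ (⨆ u ∈ B, g u) = ⨆ s ∈ A, ⨆ u ∈ B, f s ⊓ g u := by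
  apply le_antisymm
  · rw [hB]
    refine iSup₂_le fun u hu => ?_
    rw [inf_comm, hA]
    refine iSup₂_le fun s hs => ?_
    rw [inf_comm]
    exact le_iSup₂_of_le s hs (le_iSup₂_of_le u hu le_rfl)
  · refine iSup₂_le fun s hs => iSup₂_le fun u hu => le_inf ?_ ?_
    · exact le_trans inf_le_left (le_iSup₂_of_le s hs le_rfl)
    · exact le_trans inf_le_right (le_iSup₂_of_le u hu le_rfl)

end Aux

/-- Correspondences are closed under binary products, assuming either
finite couplings and distributivity, or join-infinite distributivity of the quantale. -/
theorem corresp_prod2 {V : Type u} [AffineQuantale V] (F G : SetFunctor.{u})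
    (hF : PreservesWeakPullbacks F) (hG : PreservesWeakPullbacks G)
    (τF : F.obj V → V) (τG : G.obj V → V)
    (hwF : WellBehaved F τF) (hwG : WellBehaved G τG)
    (ΓF : Set (F.obj V → V)) (ΓG : Set (G.obj V → V))
    (hcF : Corresp F τF ΓF) (hcG : Corresp G τG ΓG)
    (hdist :
      (HasFiniteCouplings F ∧ HasFiniteCouplings G ∧
        ∀ x y z : V, (x ⊔ z) ⊓ (y ⊔ z) = (x ⊓ y) ⊔ z) ∨
      (∀ (x : V) (S : Set V), x ⊓ sSup S = ⨆ s ∈ S, x ⊓ s)) :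
    Corresp (prod2F F G) (fun p : F.obj V × G.obj V => τF p.1 ⊓ τG p.2)
      (((fun τ' : F.obj V → V => fun p : F.obj V × G.obj V => τ' p.1) '' ΓF) ∪
       ((fun τ' : G.obj V → V => fun p : F.obj V × G.obj V => τ' p.2) '' ΓG)) := by
  
  intro X d hd t₁ t₂
  obtain ⟨a₁, b₁⟩ := t₁
  obtain ⟨a₂, b₂⟩ := t₂
  set A := couplings F a₁ a₂ with hAdef
  set B := couplings G b₁ b₂ with hBdef
  set f : F.obj (X × X) → V := fun s => τF (F.map (fun p => d p.1 p.2) s) with hfdef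
  set g : G.obj (X × X) → V := fun u => τG (G.map (fun p => d p.1 p.2) u) with hgdef
  have hA : ∀ x : V, x ⊓ (⨆ s ∈ A, f s) = ⨆ s ∈ A, x ⊓ f s := by
    intro x
    rcases hdist with ⟨hFf, _, hD⟩ | hJ
    · exact aux_inf_biSup A f x (aux_inf_sSup_finite hD x ((hFf X a₁ a₂).image f))
    · exact aux_inf_biSup A f x (hJ x _)
  have hB : ∀ x : V, x ⊓ (⨆ u ∈ B, g u) = ⨆ u ∈ B, x ⊓ g u := by
    intro x
    rcases hdist with ⟨_, hGf, hD⟩ | hJ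
    · exact aux_inf_biSup B g x (aux_inf_sSup_finite hD x ((hGf X b₁ b₂).image g))
    · exact aux_inf_biSup B g x (hJ x _)
  have hset : couplings (prod2F F G) (a₁, b₁) (a₂, b₂) = A ×ˢ B := by
    ext t
    simp only [couplings, prod2F, Set.mem_setOf_eq, Set.mem_prod, Prod.ext_iff, hAdef, hBdef]
    exact Iff.intro (fun h => ⟨⟨h.1.1, h.2.1⟩, h.1.2, h.2.2⟩) (fun h => ⟨⟨h.1.1, h.2.1⟩, h.1.2, h.2.2⟩)
  have h1 : couplingLift (prod2F F G) (fun p : F.obj V × G.obj V => τF p.1 ⊓ τG p.2) d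
      (a₁, b₁) (a₂, b₂) = (⨆ s ∈ A, f s) ⊓ (⨆ u ∈ B, g u) := by
    have heq : couplingLift (prod2F F G) (fun p : F.obj V × G.obj V => τF p.1 ⊓ τG p.2) d
        (a₁, b₁) (a₂, b₂)
        = ⨆ t ∈ couplings (prod2F F G) (a₁, b₁) (a₂, b₂), f t.1 ⊓ g t.2 := rfl
    rw [heq, hset]
    exact (aux_biSup_prodSet A B fun s u => f s ⊓ g u).trans
      (aux_sup_inf_sup A B f g hA hB).symm
  have h2 : codensityLift (prod2F F G)
      (((fun τ' : F.obj V → V => fun p : F.obj V × G.obj V => τ' p.1) '' ΓF) ∪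
       ((fun τ' : G.obj V → V => fun p : F.obj V × G.obj V => τ' p.2) '' ΓG)) d
      (a₁, b₁) (a₂, b₂)
      = codensityLift F ΓF d a₁ a₂ ⊓ codensityLift G ΓG d b₁ b₂ := by
    unfold codensityLift
    rw [iInf_union]
    congr 1
    · exact iInf_image
    · exact iInf_image
  calc couplingLift (prod2F F G) (fun p : F.obj V × G.obj V => τF p.1 ⊓ τG p.2) d
        (a₁, b₁) (a₂, b₂)
      = (⨆ s ∈ A, f s) ⊓ (⨆ u ∈ B, g u) := h1
    _ = couplingLift F τF d a₁ a₂ ⊓ couplingLift G τG d b₁ b₂ := rfl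
    _ = codensityLift F ΓF d a₁ a₂ ⊓ codensityLift G ΓG d b₁ b₂ := by
        rw [hcF d hd a₁ a₂, hcG d hd b₁ b₂]
    _ = _ := h2.symm
end

section
/- Let V be a commutative, unital, affine quantale, A a set, and let A also denote the constant Set endofunctor mapping every set to A. Then there is a correspondence ⟨A, τ_⊤, {τ_a | a ∈ A}⟩, where τ_⊤ : A → V is constant ⊤ and τ_a(b) = ⊤ if b = a and τ_a(b) = ⊥ otherwise. Moreover, any other correspondence ⟨A, τ, Γ⟩ (with τ well-behaved) is equivalent to ⟨A, τ_⊤, {τ_a | a ∈ A}⟩, i.e. yields the same liftings. -/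
universe u

open SetFunctor AffineQuantale

/-- The constant `Set` endofunctor with value `A`. -/
def constF (A : Type u) : SetFunctor.{u} :=
  ⟨fun _ => A, fun _ a => a, fun _ => rfl, fun _ _ _ => rfl⟩

/-- The modality `τ_a`, sending `a` to `⊤` and everything else to `⊥`. -/
noncomputable def tauA {V : Type u} [AffineQuantale V] {A : Type u} [DecidableEq A]
    (a : A) : A → V :=
  fun b => if b = a then ⊤ else ⊥

section Aux

variable {V : Type u} [AffineQuantale V]

lemma hom_self_top (x : V) : hom x x = ⊤ := by
  apply top_unique
  apply le_sSup
  show AffineQuantale.tensor ⊤ x ≤ x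
  rw [AffineQuantale.tensor_comm, AffineQuantale.tensor_top]

lemma de_self_top (x : V) : de x x = ⊤ := by
  simp [de, hom_self_top]

lemma hom_top_bot : hom (⊤ : V) ⊥ = ⊥ := by
  refine le_antisymm (sSup_le fun x hx => ?_) bot_le
  have : AffineQuantale.tensor x ⊤ ≤ ⊥ := hx
  rwa [AffineQuantale.tensor_top] at this

lemma isMor_const_top {X : Type u} (d : X → X → V) :
    IsMor d de (fun _ => (⊤ : V)) := by
  intro x y
  simp [de_self_top]

lemma couplingLift_const_eq {A : Type u} (τ : A → V) {X : Type u} (d : X → X → V)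
    (t₁ t₂ : A) [Decidable (t₁ = t₂)] :
    couplingLift (constF A) τ d t₁ t₂ = if t₁ = t₂ then τ t₁ else ⊥ := by
  show (⨆ t : A, ⨆ _ : t = t₁ ∧ t = t₂, τ t) = _
  split
  · next h =>
    subst h
    apply le_antisymm
    · refine iSup₂_le fun t ht => ?_
      rcases ht with ⟨rfl, -⟩
      exact le_rfl
    · exact le_iSup₂ (f := fun (t : A) (_ : t = t₁ ∧ t = t₁) => τ t) t₁ ⟨rfl, rfl⟩
  · next h =>
    refine le_antisymm (iSup₂_le fun t ht => ?_) bot_le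
    rcases ht with ⟨rfl, rfl⟩
    exact absurd rfl h

lemma codensityLift_const_eq {A : Type u} (Γ : Set (A → V)) {X : Type u}
    (d : X → X → V) (t₁ t₂ : A) :
    codensityLift (constF A) Γ d t₁ t₂ = ⨅ σ ∈ Γ, de (σ t₁) (σ t₂) := by
  refine iInf_congr fun σ => iInf_congr fun hσ => ?_
  apply le_antisymm
  · exact iInf₂_le (fun _ => (⊤ : V)) (isMor_const_top d)
  · exact le_iInf₂ fun f hf => le_rfl

lemma corresp_const_main {A : Type u} [DecidableEq A] :
    Corresp (constF A) (fun _ : A => (⊤ : V)) {σ : A → V | ∃ a : A, σ = tauA a} := by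
  intro X d hd t₁ t₂
  change A at t₁ t₂
  erw [couplingLift_const_eq, codensityLift_const_eq]
  by_cases h : t₁ = t₂
  · subst h
    simp only [if_pos rfl]
    symm
    exact top_unique (le_iInf₂ fun σ hσ => (de_self_top _).ge)
  · simp only [if_neg h]
    symm
    refine le_antisymm ?_ bot_le
    calc (⨅ σ ∈ {σ : A → V | ∃ a : A, σ = tauA a}, de (σ t₁) (σ t₂))
        ≤ de (tauA t₁ t₁) (tauA t₁ t₂) := iInf₂_le (tauA t₁) ⟨t₁, rfl⟩
      _ = ⊥ := by
        have h' : ¬ t₂ = t₁ := fun h' => h h'.symm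
        simp [tauA, h', de, hom_top_bot]

end Aux

/-- For the constant functor `A` there is a correspondence
`⟨A, τ_⊤, {τ_a | a ∈ A}⟩`, and every other correspondence `⟨A, τ, Γ⟩` with `τ`
well-behaved is equivalent to it (yields the same liftings). -/
theorem corresp_const {V : Type u} [AffineQuantale V] (A : Type u) [DecidableEq A] :
    Corresp (constF A) (fun _ : A => (⊤ : V)) {σ : A → V | ∃ a : A, σ = tauA a} ∧
    ∀ (τ : A → V) (Γ : Set (A → V)),
      WellBehaved (constF A) τ → Corresp (constF A) τ Γ →
      ∀ {X : Type u} (d : X → X → V), IsPMet d → ∀ t₁ t₂ : A,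
        couplingLift (constF A) τ d t₁ t₂
            = couplingLift (constF A) (fun _ : A => (⊤ : V)) d t₁ t₂ ∧
        codensityLift (constF A) Γ d t₁ t₂
            = codensityLift (constF A) {σ : A → V | ∃ a : A, σ = tauA a} d t₁ t₂ := by
  refine ⟨corresp_const_main, ?_⟩
  intro τ Γ hwb hcorr X d hd t₁ t₂
  have htop : ∀ t : A, τ t = ⊤ := by
    intro t
    have h3 := hwb.2.2
    have ht : t ∈ Set.range ((constF A).map (fun x : ({⊤} : Set V) => (x : V))) :=
      ⟨t, rfl⟩
    rw [h3] at ht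
    exact ht
  have hcl : couplingLift (constF A) τ d t₁ t₂
      = couplingLift (constF A) (fun _ : A => (⊤ : V)) d t₁ t₂ := by
    rw [couplingLift_const_eq, couplingLift_const_eq, htop t₁]
  refine ⟨hcl, ?_⟩
  rw [← hcorr d hd t₁ t₂, ← corresp_const_main d hd t₁ t₂, hcl]
end

section
/- Let V be a commutative, unital, affine quantale and Id the identity Set endofunctor. For any well-behaved modality τ : V → V there is a duality ⟨Id, τ, {τ}⟩: for every V-pseudometric d on a set X and all x, y ∈ X, τ(d(x,y)) (the coupling-based lifting, the unique coupling of x and y being (x,y)) equals ⋀_{f : d → d_e morphism} d_e(τ(f(x)), τ(f(y))) (the codensity lifting along {τ}). -/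
universe u

open SetFunctor AffineQuantale

/-- Duality for the identity functor: for any well-behaved modality
`τ : V → V`, the coupling-based lifting `τ(d(x,y))` equals the codensity lifting
along `{τ}`. -/
theorem duality_identity {V : Type u} [AffineQuantale V] (τ : V → V)
    (hmono : Monotone τ)
    (hsub : ∀ p q : V, tensor (τ p) (τ q) ≤ τ (tensor p q))
    (htop : τ ⁻¹' {⊤} = {⊤})
    {X : Type u} (d : X → X → V) (hd : IsPMet d) (x y : X) :
    τ (d x y)
      = ⨅ f ∈ {f : X → V | IsMor d de f}, de (τ (f x)) (τ (f y)) := by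
  have tmono : ∀ a b c : V, a ≤ b → tensor c a ≤ tensor c b := by
    intro a b c h
    have : tensor c (sSup {a, b}) = ⨆ y ∈ ({a, b} : Set V), tensor c y :=
      tensor_sSup c {a, b}
    have hb : sSup ({a, b} : Set V) = b := by
      rw [sSup_pair, sup_eq_right.mpr h]
    rw [hb] at this
    rw [this]
    exact le_biSup _ (by simp)
  have adj : ∀ a b c : V, a ≤ hom b c ↔ tensor a b ≤ c := by
    intro a b c
    constructor
    · intro h
      have h1 : tensor (hom b c) b ≤ c := by
        rw [tensor_comm, hom, tensor_sSup]
        exact iSup₂_le fun z hz => by rw [tensor_comm]; exact hz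
      calc tensor a b ≤ tensor (hom b c) b := by
            rw [tensor_comm a b, tensor_comm (hom b c) b]; exact tmono _ _ _ h
        _ ≤ c := h1
    · intro h
      exact le_sSup h
  have ttop : τ ⊤ = ⊤ := by
    have : (⊤ : V) ∈ τ ⁻¹' {⊤} := by rw [htop]; rfl
    simpa using this
  apply le_antisymm
  · refine le_iInf₂ fun f hf => ?_
    have h := hf x y
    refine le_inf ?_ ?_
    · rw [adj]
      have h1 : d x y ≤ hom (f x) (f y) := h.trans inf_le_left
      calc tensor (τ (d x y)) (τ (f x)) ≤ τ (tensor (d x y) (f x)) := hsub _ _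
        _ ≤ τ (f y) := hmono (by rw [← adj]; exact h1)
    · rw [adj]
      have h1 : d x y ≤ hom (f y) (f x) := h.trans inf_le_right
      calc tensor (τ (d x y)) (τ (f y)) ≤ τ (tensor (d x y) (f y)) := hsub _ _
        _ ≤ τ (f x) := hmono (by rw [← adj]; exact h1)
  · obtain ⟨hrefl, hsym, htri⟩ := hd
    have hfmor : IsMor d de (fun z => d x z) := by
      intro z w
      refine le_inf ?_ ?_
      · rw [adj]
        rw [tensor_comm]
        exact htri x w z
      · rw [adj]
        rw [tensor_comm, hsym z w]
        exact htri x z w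
    refine iInf₂_le_of_le (fun z => d x z) hfmor ?_
    show de (τ (d x x)) (τ (d x y)) ≤ τ (d x y)
    rw [hrefl, ttop]
    refine inf_le_left.trans ?_
    exact sSup_le fun z hz => by rw [Set.mem_setOf_eq, tensor_top] at hz; exact hz
end

section
/- (Discrete Kantorovich–Rubinstein duality.) Fix M ∈ (0,∞] and consider the quantale V = ([0,M], ≥) with truncated addition x⊗y = min(x+y, M), for which the Euclidean pseudometric is d_e(x,y) = |x−y| and morphisms into d_e are non-expansive maps. Let 𝒟 be the finite probability distribution functor and 𝔼 : 𝒟[0,M] → [0,M] the expectation modality 𝔼(μ) = Σ_{v} v·μ(v). Then there is a duality ⟨𝒟, 𝔼, {𝔼}⟩: for every V-pseudometric d on a set X and all finitely supported probability distributions μ, ν on X, inf_{σ ∈ Ω(μ,ν)} Σ_{x,y∈X} d(x,y)·σ(x,y) = sup_{f : d→d_e non-expansive} | Σ_x f(x)·μ(x) − Σ_x f(x)·ν(x) |. -/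
open scoped ENNReal
set_option linter.unusedSectionVars false
namespace KRAux

variable {X : Type*}

noncomputable def costFin (S : Finset X) (c : X → X → ℝ≥0∞) (σ : X × X → ℝ≥0∞) : ℝ≥0∞ :=
  ∑ p ∈ S ×ˢ S, c p.1 p.2 * σ p

def Cpl (S : Finset X) (μ ν : X → ℝ≥0∞) : Set (X × X → ℝ≥0∞) :=
  {σ | (∀ p : X × X, σ p ≠ 0 → p.1 ∈ S ∧ p.2 ∈ S) ∧
    (∀ x, ∑ y ∈ S, σ (x, y) = μ x) ∧ (∀ y, ∑ x ∈ S, σ (x, y) = ν y)}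

section Basic

variable {S : Finset X} {μ ν : X → ℝ≥0∞} {σ : X × X → ℝ≥0∞}

lemma cpl_nonempty (hμS : ∀ x, x ∉ S → μ x = 0) (hνS : ∀ x, x ∉ S → ν x = 0)
    (hμ1 : ∑ x ∈ S, μ x = 1) (hν1 : ∑ x ∈ S, ν x = 1) :
    (Cpl S μ ν).Nonempty := by
  refine ⟨fun p => μ p.1 * ν p.2, ?_, fun x => ?_, fun y => ?_⟩
  · intro p hp
    rcases mul_ne_zero_iff.1 hp with ⟨h1, h2⟩
    constructor
    · by_contra h; exact h1 (hμS _ h)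
    · by_contra h; exact h2 (hνS _ h)
  · simp only []
    rw [← Finset.mul_sum, hν1, mul_one]
  · simp only []
    rw [← Finset.sum_mul, hμ1, one_mul]

lemma cpl_isClosed : IsClosed (Cpl S μ ν) := by
  have : Cpl S μ ν = (⋂ p ∈ {p : X × X | ¬(p.1 ∈ S ∧ p.2 ∈ S)}, {σ : X × X → ℝ≥0∞ | σ p = 0}) ∩
      ((⋂ x, {σ : X × X → ℝ≥0∞ | ∑ y ∈ S, σ (x, y) = μ x}) ∩
        (⋂ y, {σ : X × X → ℝ≥0∞ | ∑ x ∈ S, σ (x, y) = ν y})) := by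
    ext σ
    simp only [Cpl, Set.mem_setOf_eq, Set.mem_inter_iff, Set.mem_iInter]
    constructor
    · rintro ⟨h1, h2, h3⟩
      exact ⟨fun p hp => by_contra fun h => hp (h1 p h), h2, h3⟩
    · rintro ⟨h1, h2, h3⟩
      exact ⟨fun p hp => by_contra fun h => hp (h1 p h), h2, h3⟩
  rw [this]
  refine IsClosed.inter ?_ (IsClosed.inter ?_ ?_)
  · exact isClosed_biInter fun p _ => isClosed_eq (continuous_apply p) continuous_const
  · exact isClosed_iInter fun x =>
      isClosed_eq (continuous_finset_sum _ fun y _ => continuous_apply _) continuous_const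
  · exact isClosed_iInter fun y =>
      isClosed_eq (continuous_finset_sum _ fun x _ => continuous_apply _) continuous_const

lemma cpl_isCompact : IsCompact (Cpl S μ ν) :=
  cpl_isClosed.isCompact

lemma cpl_entry_le (hσ : σ ∈ Cpl S μ ν) (hμ1 : ∑ x ∈ S, μ x = 1) (p : X × X) :
    σ p ≤ 1 := by
  obtain ⟨h1, h2, h3⟩ := hσ
  by_cases h : σ p = 0
  · simp [h]
  · obtain ⟨hp1, hp2⟩ := h1 p h
    calc σ p = σ (p.1, p.2) := by rw [Prod.mk.eta]
    _ ≤ ∑ y ∈ S, σ (p.1, y) :=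
          Finset.single_le_sum (f := fun y => σ (p.1, y)) (fun y _ => zero_le) hp2
    _ = μ p.1 := h2 p.1
    _ ≤ ∑ x ∈ S, μ x := Finset.single_le_sum (fun x _ => zero_le) hp1
    _ = 1 := hμ1

lemma cpl_total (hσ : σ ∈ Cpl S μ ν) (hμ1 : ∑ x ∈ S, μ x = 1) :
    ∑ p ∈ S ×ˢ S, σ p = 1 := by
  rw [Finset.sum_product]
  calc ∑ x ∈ S, ∑ y ∈ S, σ (x, y) = ∑ x ∈ S, μ x :=
        Finset.sum_congr rfl fun x _ => hσ.2.1 x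
  _ = 1 := hμ1

lemma costFin_le {c : X → X → ℝ≥0∞} {n : ℝ≥0∞} (hcn : ∀ x y, c x y ≤ n)
    (hσ : σ ∈ Cpl S μ ν) (hμ1 : ∑ x ∈ S, μ x = 1) : costFin S c σ ≤ n := by
  calc costFin S c σ ≤ ∑ p ∈ S ×ˢ S, n * σ p :=
        Finset.sum_le_sum fun p _ => mul_le_mul_left (hcn p.1 p.2) _
  _ = n * ∑ p ∈ S ×ˢ S, σ p := by rw [Finset.mul_sum]
  _ = n := by rw [cpl_total hσ hμ1, mul_one]

lemma costFin_add {c : X → X → ℝ≥0∞} (σ τ : X × X → ℝ≥0∞) :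
    costFin S c (σ + τ) = costFin S c σ + costFin S c τ := by
  simp only [costFin, Pi.add_apply, mul_add, Finset.sum_add_distrib]

lemma costFin_continuous {c : X → X → ℝ≥0∞} (hc : ∀ x y, c x y ≠ ∞) :
    Continuous (costFin S c) :=
  continuous_finset_sum _ fun p _ =>
    (ENNReal.continuous_const_mul (hc p.1 p.2)).comp (continuous_apply p)

lemma exists_min {c : X → X → ℝ≥0∞} (hc : ∀ x y, c x y ≠ ∞)
    (hne : (Cpl S μ ν).Nonempty) :
    ∃ σ ∈ Cpl S μ ν, ∀ τ ∈ Cpl S μ ν, costFin S c σ ≤ costFin S c τ := by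
  obtain ⟨σ, hσ, hmin⟩ := cpl_isCompact.exists_isMinOn hne (costFin_continuous hc).continuousOn
  exact ⟨σ, hσ, fun τ hτ => hmin hτ⟩

end Basic
variable {X : Type*}

section Chains
variable [DecidableEq X]

/-- Rockafellar chain value (real-valued). -/
noncomputable def cval (c : X → X → ℝ≥0∞) (e : X) : X → List (X × X) → ℝ
  | x, [] => (c x e).toReal
  | x, r :: l => (c x r.2).toReal - (c r.1 r.2).toReal + cval c e r.1 l

/-- shifted pairing along a chain -/
def nplist (e : X) : X → List (X × X) → List (X × X)
  | x, [] => [(x, e)]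
  | x, r :: l => (x, r.2) :: nplist e r.1 l

lemma np_map_fst (e x : X) (l : List (X × X)) :
    (nplist e x l).map Prod.fst = x :: l.map Prod.fst := by
  induction l generalizing x with
  | nil => rfl
  | cons r l ih => simp [nplist, ih]

lemma np_map_snd (e x : X) (l : List (X × X)) :
    (nplist e x l).map Prod.snd = l.map Prod.snd ++ [e] := by
  induction l generalizing x with
  | nil => rfl
  | cons r l ih => simp [nplist, ih]

lemma np_sum (c : X → X → ℝ≥0∞) (e x : X) (l : List (X × X)) :
    ((nplist e x l).map (fun p => (c p.1 p.2).toReal)).sum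
      = cval c e x l + (l.map (fun p => (c p.1 p.2).toReal)).sum := by
  induction l generalizing x with
  | nil => simp [nplist, cval]
  | cons r l ih => simp [nplist, cval, ih]; ring

/-- counting lemma for the first marginal -/
lemma count_row (S : Finset X) (x : X) :
    ∀ (l : List (X × X)), (∀ r ∈ l, r.2 ∈ S) →
    ∑ y ∈ S, (l.count (x, y) : ℝ≥0∞) = ((l.map Prod.fst).count x : ℝ≥0∞)
  | [], _ => by simp
  | r :: t, h => by
    have ht := count_row S x t (fun r hr => h r (List.mem_cons_of_mem _ hr))
    have hr2 : r.2 ∈ S := h r (List.mem_cons_self)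
    have hcnt : ∀ y : X, ((r :: t).count (x, y) : ℝ≥0∞)
        = (t.count (x, y) : ℝ≥0∞) + (if r.1 = x ∧ r.2 = y then 1 else 0) := by
      intro y
      rw [List.count_cons]
      by_cases hxy : r = (x, y)
      · have h2 : r.1 = x ∧ r.2 = y := by rw [hxy]; exact ⟨rfl, rfl⟩
        simp [hxy, h2]
      · have h2 : ¬(r.1 = x ∧ r.2 = y) := by
          intro hc; exact hxy (Prod.ext hc.1 hc.2)
        simp [hxy, h2]
    rw [Finset.sum_congr rfl fun y _ => hcnt y, Finset.sum_add_distrib, ht]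
    have hind : ∑ y ∈ S, ((if r.1 = x ∧ r.2 = y then 1 else 0) : ℝ≥0∞)
        = if r.1 = x then 1 else 0 := by
      by_cases hx : r.1 = x
      · simp only [hx, true_and, if_true]
        rw [Finset.sum_ite_eq S r.2 (fun _ => (1:ℝ≥0∞))]
        simp [hr2]
      · simp [hx]
    rw [hind, List.map_cons, List.count_cons]
    by_cases hx : r.1 = x
    · simp [hx]
    · simp [hx]

/-- counting lemma for the second marginal -/
lemma count_col (S : Finset X) (y : X) :
    ∀ (l : List (X × X)), (∀ r ∈ l, r.1 ∈ S) →
    ∑ x ∈ S, (l.count (x, y) : ℝ≥0∞) = ((l.map Prod.snd).count y : ℝ≥0∞)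
  | [], _ => by simp
  | r :: t, h => by
    have ht := count_col S y t (fun r hr => h r (List.mem_cons_of_mem _ hr))
    have hr1 : r.1 ∈ S := h r (List.mem_cons_self)
    have hcnt : ∀ x : X, ((r :: t).count (x, y) : ℝ≥0∞)
        = (t.count (x, y) : ℝ≥0∞) + (if r.2 = y ∧ r.1 = x then 1 else 0) := by
      intro x
      rw [List.count_cons]
      by_cases hxy : r = (x, y)
      · have h2 : r.2 = y ∧ r.1 = x := by rw [hxy]; exact ⟨rfl, rfl⟩
        simp [hxy, h2]
      · have h2 : ¬(r.2 = y ∧ r.1 = x) := by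
          intro hc; exact hxy (Prod.ext hc.2 hc.1)
        simp [hxy, h2]
    rw [Finset.sum_congr rfl fun x _ => hcnt x, Finset.sum_add_distrib, ht]
    have hind : ∑ x ∈ S, ((if r.2 = y ∧ r.1 = x then 1 else 0) : ℝ≥0∞)
        = if r.2 = y then 1 else 0 := by
      by_cases hy : r.2 = y
      · simp only [hy, true_and, if_true]
        rw [Finset.sum_ite_eq S r.1 (fun _ => (1:ℝ≥0∞))]
        simp [hr1]
      · simp [hy]
    rw [hind, List.map_cons, List.count_cons]
    by_cases hy : r.2 = y
    · simp [hy]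
    · simp [hy]

/-- cost of a counting measure -/
lemma count_cost (S : Finset X) (c : X → X → ℝ≥0∞) :
    ∀ (l : List (X × X)), (∀ r ∈ l, r.1 ∈ S ∧ r.2 ∈ S) →
    ∑ p ∈ S ×ˢ S, (l.count p : ℝ≥0∞) * (c p.1 p.2)
      = (l.map (fun p => c p.1 p.2)).sum
  | [], _ => by simp
  | r :: t, h => by
    have ht := count_cost S c t (fun r hr => h r (List.mem_cons_of_mem _ hr))
    have hrS : r ∈ S ×ˢ S := by
      rw [Finset.mem_product]; exact h r (List.mem_cons_self)
    have hcnt : ∀ p : X × X, (((r :: t).count p : ℝ≥0∞)) * c p.1 p.2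
        = (t.count p : ℝ≥0∞) * c p.1 p.2 + (if r = p then 1 else 0) * c p.1 p.2 := by
      intro p
      rw [List.count_cons]
      by_cases hp : r = p
      · simp [hp, add_mul]
      · simp [hp]
    rw [Finset.sum_congr rfl fun p _ => hcnt p, Finset.sum_add_distrib, ht]
    have hind : ∑ p ∈ S ×ˢ S, (if r = p then (1:ℝ≥0∞) else 0) * c p.1 p.2 = c r.1 r.2 := by
      have : ∀ p ∈ S ×ˢ S, (if r = p then (1:ℝ≥0∞) else 0) * c p.1 p.2
          = if r = p then c p.1 p.2 else 0 := by
        intro p _; by_cases hp : r = p <;> simp [hp]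
      rw [Finset.sum_congr rfl this, Finset.sum_ite_eq (S ×ˢ S) r (fun p => c p.1 p.2)]
      simp [hrS]
    rw [hind, List.map_cons, List.sum_cons]
    ring

lemma list_sum_ne_top {w : X × X → ℝ≥0∞} (hw : ∀ p, w p ≠ ∞) :
    ∀ l : List (X × X), (l.map w).sum ≠ ∞
  | [] => by simp
  | r :: t => by
    simp only [List.map_cons, List.sum_cons]
    exact ENNReal.add_ne_top.2 ⟨hw r, list_sum_ne_top hw t⟩

lemma list_sum_toReal {w : X × X → ℝ≥0∞} (hw : ∀ p, w p ≠ ∞) :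
    ∀ l : List (X × X), ((l.map w).sum).toReal = (l.map (fun p => (w p).toReal)).sum
  | [] => by simp
  | r :: t => by
    simp only [List.map_cons, List.sum_cons]
    rw [ENNReal.toReal_add (hw r) (list_sum_ne_top hw t), list_sum_toReal hw t]

end Chains

section Pert
variable [DecidableEq X] {S : Finset X} {μ ν : X → ℝ≥0∞}

lemma cyc_mono {c : X → X → ℝ≥0∞} {n : ℝ≥0∞} (hn : n ≠ ∞) (hcn : ∀ x y, c x y ≤ n)
    (hμ1 : ∑ x ∈ S, μ x = 1) {σ : X × X → ℝ≥0∞} (hσ : σ ∈ Cpl S μ ν)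
    (hopt : ∀ τ ∈ Cpl S μ ν, costFin S c σ ≤ costFin S c τ)
    (q : X × X) (l : List (X × X)) (hq : σ q ≠ 0) (hl : ∀ r ∈ l, σ r ≠ 0) :
    (c q.1 q.2).toReal ≤ cval c q.2 q.1 l := by
  classical
  set C : List (X × X) := q :: l with hC
  set N : List (X × X) := nplist q.2 q.1 l with hN
  have hc_ne : ∀ x y, c x y ≠ ∞ := fun x y => ne_top_of_le_ne_top hn (hcn x y)
  have hCE : ∀ r ∈ C, σ r ≠ 0 := by
    intro r hr
    rcases List.mem_cons.1 hr with h | h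
    · rw [h]; exact hq
    · exact hl r h
  have hCS : ∀ r ∈ C, r.1 ∈ S ∧ r.2 ∈ S := fun r hr => hσ.1 r (hCE r hr)
  have hfst : N.map Prod.fst = C.map Prod.fst := by
    rw [hN, np_map_fst, hC, List.map_cons]
  have hsndperm : (N.map Prod.snd).Perm (C.map Prod.snd) := by
    rw [hN, np_map_snd, hC, List.map_cons]
    exact List.perm_append_singleton _ _
  have hNS : ∀ r ∈ N, r.1 ∈ S ∧ r.2 ∈ S := by
    intro r hr
    constructor
    · have h1 : r.1 ∈ N.map Prod.fst := List.mem_map_of_mem (f := Prod.fst) hr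
      rw [hfst] at h1
      obtain ⟨s, hs, hss⟩ := List.mem_map.1 h1
      rw [← hss]; exact (hCS s hs).1
    · have h1 : r.2 ∈ N.map Prod.snd := List.mem_map_of_mem (f := Prod.snd) hr
      have h2 : r.2 ∈ C.map Prod.snd := hsndperm.mem_iff.1 h1
      obtain ⟨s, hs, hss⟩ := List.mem_map.1 h2
      rw [← hss]; exact (hCS s hs).2
  -- the perturbation size
  have hCFne : C.toFinset.Nonempty := ⟨q, by simp [hC]⟩
  set δ : ℝ≥0∞ := C.toFinset.inf' hCFne σ with hδ
  obtain ⟨z, hzC, hzδ⟩ := Finset.exists_mem_eq_inf' hCFne σ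
  have hδ0 : δ ≠ 0 := by rw [hδ, hzδ]; exact hCE z (List.mem_toFinset.1 hzC)
  have hδ1 : δ ≤ 1 := by rw [hδ, hzδ]; exact cpl_entry_le hσ hμ1 z
  have hδt : δ ≠ ∞ := ne_top_of_le_ne_top ENNReal.one_ne_top hδ1
  set L : ℝ≥0∞ := (C.length : ℝ≥0∞) with hL
  have hL0 : L ≠ 0 := by simp [hL, hC]
  have hLt : L ≠ ∞ := ENNReal.natCast_ne_top _
  set ε : ℝ≥0∞ := δ / L with hε
  have hε0 : ε ≠ 0 := by
    rw [hε, Ne, ENNReal.div_eq_zero_iff]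
    push_neg
    exact ⟨hδ0, hLt⟩
  have hεt : ε ≠ ∞ := by
    rw [hε, Ne, ENNReal.div_eq_top]
    push_neg
    exact ⟨fun _ => hL0, fun h => absurd h hδt⟩
  have hkey : ∀ p, ε * (C.count p : ℝ≥0∞) ≤ σ p := by
    intro p
    by_cases hp : p ∈ C
    · calc ε * (C.count p : ℝ≥0∞) ≤ ε * L := by
            exact mul_le_mul_right (by exact_mod_cast Nat.cast_le.2 (C.count_le_length (a := p))) ε
      _ = δ := by rw [hε]; exact ENNReal.div_mul_cancel hL0 hLt
      _ ≤ σ p := by rw [hδ]; exact Finset.inf'_le σ (List.mem_toFinset.2 hp)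
    · have h0 : C.count p = 0 := List.count_eq_zero.2 hp
      simp [h0]
  set Nh : X × X → ℝ≥0∞ := fun p => ε * (C.count p : ℝ≥0∞) with hNh
  set Ph : X × X → ℝ≥0∞ := fun p => ε * (N.count p : ℝ≥0∞) with hPh
  set σ'' : X × X → ℝ≥0∞ := fun p => σ p - Nh p with hσ''
  have hsplit : ∀ p, σ'' p + Nh p = σ p := fun p => tsub_add_cancel_of_le (hkey p)
  set σ' : X × X → ℝ≥0∞ := fun p => σ'' p + Ph p with hσ'
  -- marginals of the counting measures agree
  have hrows : ∀ x, ∑ y ∈ S, Ph (x, y) = ∑ y ∈ S, Nh (x, y) := by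
    intro x
    rw [show ∑ y ∈ S, Ph (x,y) = ε * ∑ y ∈ S, (N.count (x,y) : ℝ≥0∞) by
          rw [Finset.mul_sum],
        show ∑ y ∈ S, Nh (x,y) = ε * ∑ y ∈ S, (C.count (x,y) : ℝ≥0∞) by
          rw [Finset.mul_sum],
        count_row S x N (fun r hr => (hNS r hr).2),
        count_row S x C (fun r hr => (hCS r hr).2), hfst]
  have hcols : ∀ y, ∑ x ∈ S, Ph (x, y) = ∑ x ∈ S, Nh (x, y) := by
    intro y
    rw [show ∑ x ∈ S, Ph (x,y) = ε * ∑ x ∈ S, (N.count (x,y) : ℝ≥0∞) by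
          rw [Finset.mul_sum],
        show ∑ x ∈ S, Nh (x,y) = ε * ∑ x ∈ S, (C.count (x,y) : ℝ≥0∞) by
          rw [Finset.mul_sum],
        count_col S y N (fun r hr => (hNS r hr).1),
        count_col S y C (fun r hr => (hCS r hr).1), hsndperm.count_eq]
  -- σ' is a coupling
  have hσ'mem : σ' ∈ Cpl S μ ν := by
    refine ⟨?_, fun x => ?_, fun y => ?_⟩
    · intro p hp
      by_cases h1 : σ'' p = 0
      · have h2 : Ph p ≠ 0 := by
          intro h2; apply hp; simp only [hσ']; rw [h1, h2, add_zero]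
        have h3 : N.count p ≠ 0 := by
          intro h0; apply h2; simp only [hPh]; rw [h0]; simp
        have hpN : p ∈ N := by
          by_contra hcon; exact h3 (List.count_eq_zero.2 hcon)
        exact hNS p hpN
      · have : σ p ≠ 0 := by
          intro h0; apply h1; simp only [hσ'']; rw [h0, zero_tsub]
        exact hσ.1 p this
    · have e1 : ∑ y ∈ S, σ' (x, y) = ∑ y ∈ S, σ'' (x, y) + ∑ y ∈ S, Ph (x, y) := by
        simp only [hσ']; rw [Finset.sum_add_distrib]
      rw [e1, hrows x, ← Finset.sum_add_distrib]
      calc ∑ y ∈ S, (σ'' (x, y) + Nh (x, y)) = ∑ y ∈ S, σ (x, y) :=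
            Finset.sum_congr rfl fun y _ => hsplit (x, y)
      _ = μ x := hσ.2.1 x
    · have e1 : ∑ x ∈ S, σ' (x, y) = ∑ x ∈ S, σ'' (x, y) + ∑ x ∈ S, Ph (x, y) := by
        simp only [hσ']; rw [Finset.sum_add_distrib]
      rw [e1, hcols y, ← Finset.sum_add_distrib]
      calc ∑ x ∈ S, (σ'' (x, y) + Nh (x, y)) = ∑ x ∈ S, σ (x, y) :=
            Finset.sum_congr rfl fun x _ => hsplit (x, y)
      _ = ν y := hσ.2.2 y
  -- cost computations
  set w : X × X → ℝ≥0∞ := fun p => c p.1 p.2 with hw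
  have hcostN : costFin S c Nh = ε * (C.map w).sum := by
    calc costFin S c Nh = ∑ p ∈ S ×ˢ S, ε * ((C.count p : ℝ≥0∞) * c p.1 p.2) := by
          refine Finset.sum_congr rfl fun p _ => ?_
          simp only [hNh]; ring
    _ = ε * ∑ p ∈ S ×ˢ S, (C.count p : ℝ≥0∞) * c p.1 p.2 := by rw [Finset.mul_sum]
    _ = ε * (C.map w).sum := by rw [count_cost S c C hCS]
  have hcostP : costFin S c Ph = ε * (N.map w).sum := by
    calc costFin S c Ph = ∑ p ∈ S ×ˢ S, ε * ((N.count p : ℝ≥0∞) * c p.1 p.2) := by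
          refine Finset.sum_congr rfl fun p _ => ?_
          simp only [hPh]; ring
    _ = ε * ∑ p ∈ S ×ˢ S, (N.count p : ℝ≥0∞) * c p.1 p.2 := by rw [Finset.mul_sum]
    _ = ε * (N.map w).sum := by rw [count_cost S c N hNS]
  have hfuneq : σ = σ'' + Nh := funext fun p => (hsplit p).symm
  have h1 : costFin S c σ = costFin S c σ'' + ε * (C.map w).sum := by
    rw [show costFin S c σ = costFin S c (σ'' + Nh) by rw [← hfuneq],
      costFin_add, hcostN]
  have h2 : costFin S c σ' = costFin S c σ'' + ε * (N.map w).sum := by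
    rw [show costFin S c σ' = costFin S c (σ'' + Ph) from rfl, costFin_add, hcostP]
  have hfin'' : costFin S c σ'' ≠ ∞ := by
    have hmono : costFin S c σ'' ≤ costFin S c σ :=
      Finset.sum_le_sum fun p _ => mul_le_mul_right tsub_le_self _
    exact ne_top_of_le_ne_top (ne_top_of_le_ne_top hn (costFin_le hcn hσ hμ1)) hmono
  have hle := hopt σ' hσ'mem
  rw [h1, h2] at hle
  have hsum_le : (C.map w).sum ≤ (N.map w).sum :=
    (ENNReal.mul_le_mul_iff_right hε0 hεt).1 ((ENNReal.add_le_add_iff_left hfin'').1 hle)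
  have hwne : ∀ p : X × X, w p ≠ ∞ := fun p => hc_ne p.1 p.2
  have hreal : ((C.map w).sum).toReal ≤ ((N.map w).sum).toReal :=
    (ENNReal.toReal_le_toReal (list_sum_ne_top hwne C) (list_sum_ne_top hwne N)).2 hsum_le
  rw [list_sum_toReal hwne C, list_sum_toReal hwne N] at hreal
  have hCexp : (C.map (fun p => (w p).toReal)).sum
      = (c q.1 q.2).toReal + (l.map (fun p => (w p).toReal)).sum := by
    rw [hC, List.map_cons, List.sum_cons]
  have hNexp : (N.map (fun p => (w p).toReal)).sum
      = cval c q.2 q.1 l + (l.map (fun p => (w p).toReal)).sum := by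
    rw [hN]; exact np_sum c q.2 q.1 l
  rw [hCexp, hNexp] at hreal
  linarith

end Pert

section Core
variable [DecidableEq X] {S : Finset X} {μ ν : X → ℝ≥0∞}

lemma core (hμS : ∀ x, x ∉ S → μ x = 0) (hνS : ∀ x, x ∉ S → ν x = 0)
    (hμ1 : ∑ x ∈ S, μ x = 1) (hν1 : ∑ x ∈ S, ν x = 1)
    {c : X → X → ℝ≥0∞} {n : ℝ≥0∞} (hn : n ≠ ∞) (hcn : ∀ x y, c x y ≤ n)
    (hc0 : ∀ x, c x x = 0) (hct : ∀ x y z, c x y ≤ c x z + c z y) :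
    ∃ f : X → ℝ≥0∞, (∃ z₀ ∈ S, ∀ x, f x ≤ c x z₀) ∧ (∀ x y, f x ≤ f y + c x y) ∧
      (⨅ σ ∈ Cpl S μ ν, costFin S c σ) ≤
        (∑ x ∈ S, f x * μ x) - (∑ x ∈ S, f x * ν x) := by
  classical
  have hc_ne : ∀ x y, c x y ≠ ∞ := fun x y => ne_top_of_le_ne_top hn (hcn x y)
  obtain ⟨σ, hσ, hopt⟩ := exists_min hc_ne (cpl_nonempty hμS hνS hμ1 hν1)
  have htot : ∑ p ∈ S ×ˢ S, σ p = 1 := cpl_total hσ hμ1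
  have hex : ∃ p, σ p ≠ 0 := by
    by_contra h
    push_neg at h
    rw [Finset.sum_congr rfl fun p _ => h p] at htot
    simp at htot
  obtain ⟨pstar, hpstar⟩ := hex
  have hpS : pstar.1 ∈ S ∧ pstar.2 ∈ S := hσ.1 pstar hpstar
  have hSne : S.Nonempty := ⟨pstar.1, hpS.1⟩
  have CM : ∀ (qq : X × X) (l : List (X × X)), σ qq ≠ 0 → (∀ r ∈ l, σ r ≠ 0) →
      (c qq.1 qq.2).toReal ≤ cval c qq.2 qq.1 l :=
    fun qq l h1 h2 => cyc_mono hn hcn hμ1 hσ hopt qq l h1 h2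
  set e : X := pstar.2 with he
  set V : X → Set ℝ :=
    fun x => {v | ∃ l : List (X × X), (∀ r ∈ l, σ r ≠ 0) ∧ v = cval c e x l} with hV
  have hVne : ∀ x, (V x).Nonempty := fun x => ⟨(c x e).toReal, [], by simp, rfl⟩
  have hntR : (0:ℝ) ≤ n.toReal := ENNReal.toReal_nonneg
  have htR : ∀ x y, (c x y).toReal ≤ n.toReal :=
    fun x y => ENNReal.toReal_mono hn (hcn x y)
  have hlow : ∀ x, ∀ v ∈ V x, -(n.toReal) ≤ v := by
    rintro x v ⟨l, hlE, rfl⟩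
    cases l with
    | nil =>
      simp only [cval]
      have := ENNReal.toReal_nonneg (a := c x e)
      linarith
    | cons r t =>
      have h1 : (c pstar.1 pstar.2).toReal ≤ cval c e pstar.1 (r :: t) :=
        CM pstar (r :: t) hpstar hlE
      have h2 : cval c e x (r :: t)
          = (c x r.2).toReal - (c pstar.1 r.2).toReal + cval c e pstar.1 (r :: t) := by
        simp only [cval]; ring
      have h3 := ENNReal.toReal_nonneg (a := c x r.2)
      have h4 := htR pstar.1 r.2
      have h5 := ENNReal.toReal_nonneg (a := c pstar.1 pstar.2)
      linarith
  have hBdd : ∀ x, BddBelow (V x) := fun x => ⟨-(n.toReal), fun v hv => hlow x v hv⟩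
  set F : X → ℝ := fun x => sInf (V x) with hF
  have hFle : ∀ x l, (∀ r ∈ l, σ r ≠ 0) → F x ≤ cval c e x l :=
    fun x l hl => csInf_le (hBdd x) ⟨l, hl, rfl⟩
  have hlipV : ∀ x x' (l : List (X × X)),
      cval c e x l ≤ (c x x').toReal + cval c e x' l := by
    intro x x' l
    have tri : ∀ z, (c x z).toReal ≤ (c x x').toReal + (c x' z).toReal := by
      intro z
      have h1 : c x z ≤ c x x' + c x' z := hct x z x'
      have h2 : (c x z).toReal ≤ (c x x' + c x' z).toReal :=
        ENNReal.toReal_mono (ENNReal.add_ne_top.2 ⟨hc_ne _ _, hc_ne _ _⟩) h1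
      rw [ENNReal.toReal_add (hc_ne _ _) (hc_ne _ _)] at h2
      exact h2
    cases l with
    | nil => simpa only [cval] using tri e
    | cons r t =>
      simp only [cval]
      have := tri r.2
      linarith
  have hlipF : ∀ x x', F x ≤ F x' + (c x x').toReal := by
    intro x x'
    have h1 : ∀ v ∈ V x', F x - (c x x').toReal ≤ v := by
      rintro v ⟨l, hlE, rfl⟩
      have h2 : F x ≤ (c x x').toReal + cval c e x' l :=
        le_trans (hFle x l hlE) (hlipV x x' l)
      linarith
    have := le_csInf (hVne x') h1
    linarith
  have htight : ∀ p : X × X, σ p ≠ 0 → F p.2 + (c p.1 p.2).toReal ≤ F p.1 := by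
    intro p hp
    refine le_csInf (hVne p.1) ?_
    rintro v ⟨l, hlE, rfl⟩
    have hmem : ∀ r ∈ (p.1, p.2) :: l, σ r ≠ 0 := by
      intro r hr
      rcases List.mem_cons.1 hr with h | h
      · rw [h, Prod.mk.eta]; exact hp
      · exact hlE r h
    have hval : cval c e p.2 ((p.1, p.2) :: l)
        = cval c e p.1 l - (c p.1 p.2).toReal := by
      simp only [cval, hc0]
      simp only [ENNReal.toReal_zero]
      ring
    have h2 : F p.2 ≤ cval c e p.1 l - (c p.1 p.2).toReal := by
      rw [← hval]; exact hFle p.2 _ hmem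
    linarith
  obtain ⟨z₀, hz₀S, hz₀⟩ := Finset.exists_mem_eq_inf' hSne F
  set m : ℝ := S.inf' hSne F with hm
  have hmF : ∀ x, m ≤ F x := by
    intro x
    refine le_csInf (hVne x) ?_
    rintro v ⟨l, hlE, rfl⟩
    cases l with
    | nil =>
      have h1 : m ≤ F e := Finset.inf'_le F hpS.2
      have h2 : F e ≤ cval c e e [] := hFle e [] (by simp)
      have h3 : cval c e e [] = 0 := by simp only [cval, hc0]; simp
      have h4 := ENNReal.toReal_nonneg (a := c x e)
      simp only [cval]
      linarith
    | cons r t =>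
      have hr2S : r.2 ∈ S := (hσ.1 r (hlE r (List.mem_cons_self))).2
      have h1 : m ≤ F r.2 := Finset.inf'_le F hr2S
      have h2 : F r.2 ≤ cval c e r.2 (r :: t) := hFle r.2 _ hlE
      have h3 : cval c e r.2 (r :: t) ≤ cval c e x (r :: t) := by
        simp only [cval, hc0, ENNReal.toReal_zero]
        have := ENNReal.toReal_nonneg (a := c x r.2)
        linarith
      linarith
  set G : X → ℝ := fun x => F x - m with hG
  have hG0 : ∀ x, 0 ≤ G x := fun x => by
    have := hmF x; simp only [hG]; linarith
  set f : X → ℝ≥0∞ := fun x => ENNReal.ofReal (G x) with hf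
  have hmz : m = F z₀ := hz₀
  refine ⟨f, ⟨z₀, hz₀S, fun x => ?_⟩, fun x y => ?_, ?_⟩
  · have h1 : F x ≤ F z₀ + (c x z₀).toReal := hlipF x z₀
    have h2 : G x ≤ (c x z₀).toReal := by simp only [hG]; rw [hmz]; linarith
    calc f x ≤ ENNReal.ofReal ((c x z₀).toReal) := ENNReal.ofReal_le_ofReal h2
    _ = c x z₀ := ENNReal.ofReal_toReal (hc_ne _ _)
  · have h1 : G x ≤ G y + (c x y).toReal := by
      have := hlipF x y; simp only [hG]; linarith
    calc f x ≤ ENNReal.ofReal (G y + (c x y).toReal) := ENNReal.ofReal_le_ofReal h1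
    _ ≤ ENNReal.ofReal (G y) + ENNReal.ofReal ((c x y).toReal) := ENNReal.ofReal_add_le
    _ = f y + c x y := by rw [ENNReal.ofReal_toReal (hc_ne x y)]
  · -- the value bound
    have hμfin : ∀ x ∈ S, μ x ≠ ∞ := by
      intro x hx
      refine ne_top_of_le_ne_top ENNReal.one_ne_top ?_
      rw [← hμ1]
      exact Finset.single_le_sum (fun y _ => zero_le) hx
    have hνfin : ∀ x ∈ S, ν x ≠ ∞ := by
      intro x hx
      refine ne_top_of_le_ne_top ENNReal.one_ne_top ?_
      rw [← hν1]
      exact Finset.single_le_sum (fun y _ => zero_le) hx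
    have hσfin : ∀ p, σ p ≠ ∞ :=
      fun p => ne_top_of_le_ne_top ENNReal.one_ne_top (cpl_entry_le hσ hμ1 p)
    have hrow : ∀ x, ∑ y ∈ S, (σ (x, y)).toReal = (μ x).toReal := by
      intro x
      rw [← ENNReal.toReal_sum (fun y _ => hσfin (x, y)), hσ.2.1 x]
    have hcol : ∀ y, ∑ x ∈ S, (σ (x, y)).toReal = (ν y).toReal := by
      intro y
      rw [← ENNReal.toReal_sum (fun x _ => hσfin (x, y)), hσ.2.2 y]
    have hA : ∑ x ∈ S, G x * (μ x).toReal = ∑ p ∈ S ×ˢ S, G p.1 * (σ p).toReal := by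
      rw [Finset.sum_product]
      refine Finset.sum_congr rfl fun x _ => ?_
      rw [← hrow x, Finset.mul_sum]
    have hB : ∑ y ∈ S, G y * (ν y).toReal = ∑ p ∈ S ×ˢ S, G p.2 * (σ p).toReal := by
      rw [Finset.sum_product, Finset.sum_comm]
      refine Finset.sum_congr rfl fun y _ => ?_
      rw [← hcol y, Finset.mul_sum]
    have hterm : ∀ p ∈ S ×ˢ S,
        (c p.1 p.2).toReal * (σ p).toReal
          ≤ G p.1 * (σ p).toReal - G p.2 * (σ p).toReal := by
      intro p _
      by_cases hp : σ p = 0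
      · simp [hp]
      · have h1 := htight p hp
        have h2 : (c p.1 p.2).toReal ≤ G p.1 - G p.2 := by
          simp only [hG]; linarith
        have h3 : (0:ℝ) ≤ (σ p).toReal := ENNReal.toReal_nonneg
        nlinarith
    have hcfin : costFin S c σ ≠ ∞ :=
      ne_top_of_le_ne_top hn (costFin_le hcn hσ hμ1)
    have hmain : (costFin S c σ).toReal
        ≤ ∑ x ∈ S, G x * (μ x).toReal - ∑ y ∈ S, G y * (ν y).toReal := by
      have h1 : (costFin S c σ).toReal
          = ∑ p ∈ S ×ˢ S, (c p.1 p.2).toReal * (σ p).toReal := by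
        rw [costFin, ENNReal.toReal_sum
          (fun p _ => ENNReal.mul_ne_top (hc_ne p.1 p.2) (hσfin p))]
        exact Finset.sum_congr rfl fun p _ => ENNReal.toReal_mul
      rw [h1, hA, hB, ← Finset.sum_sub_distrib]
      exact Finset.sum_le_sum hterm
    have hAe : ∑ x ∈ S, f x * μ x = ENNReal.ofReal (∑ x ∈ S, G x * (μ x).toReal) := by
      rw [ENNReal.ofReal_sum_of_nonneg
        (fun x _ => mul_nonneg (hG0 x) ENNReal.toReal_nonneg)]
      refine Finset.sum_congr rfl fun x hx => ?_
      rw [ENNReal.ofReal_mul (hG0 x), ENNReal.ofReal_toReal (hμfin x hx)]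
    have hBe : ∑ x ∈ S, f x * ν x = ENNReal.ofReal (∑ x ∈ S, G x * (ν x).toReal) := by
      rw [ENNReal.ofReal_sum_of_nonneg
        (fun x _ => mul_nonneg (hG0 x) ENNReal.toReal_nonneg)]
      refine Finset.sum_congr rfl fun x hx => ?_
      rw [ENNReal.ofReal_mul (hG0 x), ENNReal.ofReal_toReal (hνfin x hx)]
    have hBnonneg : 0 ≤ ∑ x ∈ S, G x * (ν x).toReal :=
      Finset.sum_nonneg fun x _ => mul_nonneg (hG0 x) ENNReal.toReal_nonneg
    have hsub : (∑ x ∈ S, f x * μ x) - (∑ x ∈ S, f x * ν x)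
        = ENNReal.ofReal (∑ x ∈ S, G x * (μ x).toReal - ∑ x ∈ S, G x * (ν x).toReal) := by
      rw [hAe, hBe, ENNReal.ofReal_sub _ hBnonneg]
    calc (⨅ τ ∈ Cpl S μ ν, costFin S c τ) ≤ costFin S c σ := iInf₂_le σ hσ
    _ = ENNReal.ofReal ((costFin S c σ).toReal) := (ENNReal.ofReal_toReal hcfin).symm
    _ ≤ ENNReal.ofReal (∑ x ∈ S, G x * (μ x).toReal - ∑ x ∈ S, G x * (ν x).toReal) :=
      ENNReal.ofReal_le_ofReal hmain
    _ = (∑ x ∈ S, f x * μ x) - (∑ x ∈ S, f x * ν x) := hsub.symm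

end Core

section Bridge
variable {S : Finset X} {μ ν : X → ℝ≥0∞}

lemma bridge (d : X → X → ℝ≥0∞) (hμ1 : ∑ x ∈ S, μ x = 1)
    (hne : (Cpl S μ ν).Nonempty) :
    (⨅ σ ∈ Cpl S μ ν, costFin S d σ)
      ≤ ⨆ k : ℕ, ⨅ σ ∈ Cpl S μ ν, costFin S (fun x y => d x y ⊓ (k : ℝ≥0∞)) σ := by
  classical
  set c : ℕ → X → X → ℝ≥0∞ := fun k x y => d x y ⊓ (k : ℝ≥0∞) with hc
  set L : ℝ≥0∞ := ⨆ k : ℕ, ⨅ σ ∈ Cpl S μ ν, costFin S (c k) σ with hL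
  have hcne : ∀ k x y, c k x y ≠ ∞ :=
    fun k x y => ne_top_of_le_ne_top (ENNReal.natCast_ne_top k) inf_le_right
  have hcmono : ∀ (j k : ℕ), j ≤ k → ∀ σ, costFin S (c j) σ ≤ costFin S (c k) σ := by
    intro j k hjk σ
    refine Finset.sum_le_sum fun p _ => mul_le_mul_left ?_ _
    exact inf_le_inf le_rfl (Nat.cast_le.2 hjk)
  set K : ℕ → Set (X × X → ℝ≥0∞) :=
    fun k => Cpl S μ ν ∩ {σ | costFin S (c k) σ ≤ L} with hK
  have hKsub : ∀ (j k : ℕ), j ≤ k → K k ⊆ K j := by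
    intro j k hjk σ hσ
    exact ⟨hσ.1, le_trans (hcmono j k hjk σ) hσ.2⟩
  have hKcl : ∀ k, IsClosed (K k) := by
    intro k
    exact cpl_isClosed.inter (IsClosed.preimage (costFin_continuous (hcne k)) isClosed_Iic)
  have hKne : ∀ k, (K k).Nonempty := by
    intro k
    obtain ⟨σk, hσk, hmin⟩ := exists_min (hcne k) hne
    refine ⟨σk, hσk, ?_⟩
    calc costFin S (c k) σk ≤ ⨅ σ ∈ Cpl S μ ν, costFin S (c k) σ :=
          le_iInf₂ fun τ hτ => hmin τ hτ
    _ ≤ L := le_iSup (fun k => ⨅ σ ∈ Cpl S μ ν, costFin S (c k) σ) k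
  have hdir : Directed (· ⊇ ·) K := by
    intro j k
    exact ⟨max j k, hKsub j _ (le_max_left _ _), hKsub k _ (le_max_right _ _)⟩
  obtain ⟨σT, hsT⟩ := IsCompact.nonempty_iInter_of_directed_nonempty_isCompact_isClosed
    K hdir hKne (fun k => (hKcl k).isCompact) hKcl
  have hsTk : ∀ k : ℕ, σT ∈ K k := fun k => Set.mem_iInter.1 hsT k
  have hsTC : σT ∈ Cpl S μ ν := (hsTk 0).1
  have hlim : costFin S d σT = ⨆ k : ℕ, costFin S (c k) σT := by
    have hterm : ∀ p : X × X, d p.1 p.2 * σT p = ⨆ k : ℕ, c k p.1 p.2 * σT p := by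
      intro p
      have hsup : (⨆ k : ℕ, (d p.1 p.2 ⊓ (k : ℝ≥0∞))) = d p.1 p.2 := by
        apply le_antisymm (iSup_le fun k => inf_le_left)
        by_cases h : d p.1 p.2 = ∞
        · rw [h]
          have : ∀ k : ℕ, (⊤ : ℝ≥0∞) ⊓ (k : ℝ≥0∞) = (k : ℝ≥0∞) := fun k => top_inf_eq _
          calc (⊤ : ℝ≥0∞) = ⨆ k : ℕ, (k : ℝ≥0∞) := ENNReal.iSup_natCast.symm
          _ ≤ ⨆ k : ℕ, (⊤ : ℝ≥0∞) ⊓ (k : ℝ≥0∞) := iSup_mono fun k => (this k).ge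
        · obtain ⟨k, hk⟩ := ENNReal.exists_nat_gt h
          exact le_iSup_of_le k (le_inf le_rfl hk.le)
      rw [hc]
      rw [← ENNReal.iSup_mul, hsup]
    rw [costFin, Finset.sum_congr rfl fun p _ => hterm p]
    exact ENNReal.finsetSum_iSup_of_monotone fun p j k hjk =>
      mul_le_mul_left (inf_le_inf le_rfl (Nat.cast_le.2 hjk)) _
  calc (⨅ σ ∈ Cpl S μ ν, costFin S d σ) ≤ costFin S d σT := iInf₂_le σT hsTC
  _ = ⨆ k : ℕ, costFin S (c k) σT := hlim
  _ ≤ L := iSup_le fun k => (hsTk k).2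

end Bridge
end KRAux

open KRAux in
/-- **discrete Kantorovich–Rubinstein duality.** For the quantale
`([0,M], ≥)` with truncated addition (`M ∈ (0,∞]`), a `[0,M]`-valued pseudometric `d` on
`X`, and finitely supported probability distributions `μ, ν` on `X`, the infimum of the
transport costs over all couplings equals the supremum over all non-expansive functions
`f : d → d_e` of `|Σ f·μ − Σ f·ν|`. -/
theorem kantorovich_rubinstein (M : ℝ≥0∞) (hM : 0 < M) (X : Type*)
    (d : X → X → ℝ≥0∞)
    (hdM : ∀ x y, d x y ≤ M)
    (hrefl : ∀ x, d x x = 0)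
    (hsymm : ∀ x y, d x y = d y x)
    (htri : ∀ x y z, d x y ≤ d x z + d z y)
    (μ ν : X → ℝ≥0∞)
    (hμfin : (Function.support μ).Finite) (hμ : ∑' x, μ x = 1)
    (hνfin : (Function.support ν).Finite) (hν : ∑' x, ν x = 1) :
    (⨅ σ ∈ {σ : X × X → ℝ≥0∞ | (Function.support σ).Finite ∧
        (∀ x, ∑' y, σ (x, y) = μ x) ∧ (∀ y, ∑' x, σ (x, y) = ν y)},
      ∑' p : X × X, d p.1 p.2 * σ p)
    = (⨆ f ∈ {f : X → ℝ≥0∞ | (∀ x, f x ≤ M) ∧ ∀ x y, f x ≤ f y + d x y},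
        ((∑' x, f x * μ x) - (∑' x, f x * ν x)) ⊔
          ((∑' x, f x * ν x) - (∑' x, f x * μ x))) := by
  classical
  set S : Finset X := (hμfin.union hνfin).toFinset with hS
  have hmemS : ∀ x, x ∈ S ↔ (μ x ≠ 0 ∨ ν x ≠ 0) := by
    intro x
    rw [hS, Set.Finite.mem_toFinset]
    simp [Function.mem_support]
  have hμS : ∀ x, x ∉ S → μ x = 0 := by
    intro x hx; by_contra h; exact hx ((hmemS x).2 (Or.inl h))
  have hνS : ∀ x, x ∉ S → ν x = 0 := by
    intro x hx; by_contra h; exact hx ((hmemS x).2 (Or.inr h))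
  have hμ1 : ∑ x ∈ S, μ x = 1 := by
    rw [← tsum_eq_sum (L := SummationFilter.unconditional X) fun x hx => hμS x hx]; exact hμ
  have hν1 : ∑ x ∈ S, ν x = 1 := by
    rw [← tsum_eq_sum (L := SummationFilter.unconditional X) fun x hx => hνS x hx]; exact hν
  have hsets : {σ : X × X → ℝ≥0∞ | (Function.support σ).Finite ∧
        (∀ x, ∑' y, σ (x, y) = μ x) ∧ (∀ y, ∑' x, σ (x, y) = ν y)} = Cpl S μ ν := by
    ext σ
    constructor
    · rintro ⟨hfin, hrow, hcol⟩
      have hsupp : ∀ p : X × X, σ p ≠ 0 → p.1 ∈ S ∧ p.2 ∈ S := by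
        intro p hp
        have h1 : σ p ≤ μ p.1 := by
          rw [← hrow p.1]
          calc σ p = σ (p.1, p.2) := by rw [Prod.mk.eta]
          _ ≤ ∑' y, σ (p.1, y) := ENNReal.le_tsum p.2
        have h2 : σ p ≤ ν p.2 := by
          rw [← hcol p.2]
          calc σ p = σ (p.1, p.2) := by rw [Prod.mk.eta]
          _ ≤ ∑' x, σ (x, p.2) := ENNReal.le_tsum p.1
        constructor
        · exact (hmemS p.1).2 (Or.inl fun h0 => hp (le_antisymm (h0 ▸ h1) zero_le))
        · exact (hmemS p.2).2 (Or.inr fun h0 => hp (le_antisymm (h0 ▸ h2) zero_le))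
      refine ⟨hsupp, fun x => ?_, fun y => ?_⟩
      · rw [← hrow x]
        refine (tsum_eq_sum fun y hy => ?_).symm
        by_contra h
        exact hy (hsupp (x, y) h).2
      · rw [← hcol y]
        refine (tsum_eq_sum fun x hx => ?_).symm
        by_contra h
        exact hx (hsupp (x, y) h).1
    · rintro ⟨hsupp, hrow, hcol⟩
      refine ⟨?_, fun x => ?_, fun y => ?_⟩
      · refine Set.Finite.subset ((S.finite_toSet).prod (S.finite_toSet)) ?_
        intro p hp
        exact Set.mem_prod.2 ⟨(hsupp p hp).1, (hsupp p hp).2⟩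
      · rw [tsum_eq_sum (s := S) fun y hy => ?_]
        · exact hrow x
        · by_contra h
          exact hy (hsupp (x, y) h).2
      · rw [tsum_eq_sum (s := S) fun x hx => ?_]
        · exact hcol y
        · by_contra h
          exact hx (hsupp (x, y) h).1
  have hcost : ∀ σ ∈ Cpl S μ ν, ∑' p : X × X, d p.1 p.2 * σ p = costFin S d σ := by
    intro σ hσ
    refine tsum_eq_sum fun p hp => ?_
    have : σ p = 0 := by
      by_contra h
      obtain ⟨h1, h2⟩ := hσ.1 p h
      exact hp (Finset.mem_product.2 ⟨h1, h2⟩)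
    rw [this, mul_zero]
  have hinf_eq : (⨅ σ ∈ {σ : X × X → ℝ≥0∞ | (Function.support σ).Finite ∧
        (∀ x, ∑' y, σ (x, y) = μ x) ∧ (∀ y, ∑' x, σ (x, y) = ν y)},
      ∑' p : X × X, d p.1 p.2 * σ p) = ⨅ σ ∈ Cpl S μ ν, costFin S d σ := by
    rw [hsets]
    refine iInf_congr fun σ => ?_
    by_cases h : σ ∈ Cpl S μ ν
    · rw [iInf_pos h, iInf_pos h, hcost σ h]
    · rw [iInf_neg h, iInf_neg h]
  rw [hinf_eq]
  apply le_antisymm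
  · -- hard direction
    have hCplne : (Cpl S μ ν).Nonempty := cpl_nonempty hμS hνS hμ1 hν1
    refine le_trans (bridge d hμ1 hCplne) (iSup_le fun k => ?_)
    set c : X → X → ℝ≥0∞ := fun x y => d x y ⊓ (k : ℝ≥0∞) with hck
    have hn : (k : ℝ≥0∞) ≠ ∞ := ENNReal.natCast_ne_top k
    have hcn : ∀ x y, c x y ≤ (k : ℝ≥0∞) := fun x y => inf_le_right
    have hc0 : ∀ x, c x x = 0 := fun x => by
      simp only [hck]; rw [hrefl x]; simp
    have hct : ∀ x y z, c x y ≤ c x z + c z y := by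
      intro x y z
      have key : ∀ a b : ℝ≥0∞, (a + b) ⊓ (k : ℝ≥0∞) ≤ (a ⊓ k) + (b ⊓ k) := by
        intro a b
        rcases le_total a (k : ℝ≥0∞) with h | h
        · rcases le_total b (k : ℝ≥0∞) with h' | h'
          · calc (a + b) ⊓ (k : ℝ≥0∞) ≤ a + b := inf_le_left
            _ = a ⊓ k + b ⊓ k := by rw [inf_eq_left.2 h, inf_eq_left.2 h']
          · calc (a + b) ⊓ (k : ℝ≥0∞) ≤ (k : ℝ≥0∞) := inf_le_right
            _ = b ⊓ k := (inf_eq_right.2 h').symm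
            _ ≤ a ⊓ k + b ⊓ k := le_add_self
        · calc (a + b) ⊓ (k : ℝ≥0∞) ≤ (k : ℝ≥0∞) := inf_le_right
          _ = a ⊓ k := (inf_eq_right.2 h).symm
          _ ≤ a ⊓ k + b ⊓ k := le_self_add
      calc c x y ≤ (d x z + d z y) ⊓ (k : ℝ≥0∞) := inf_le_inf (htri x y z) le_rfl
      _ ≤ c x z + c z y := key _ _
    obtain ⟨f, ⟨z₀, hz₀S, hfb⟩, hflip, hfval⟩ := core hμS hνS hμ1 hν1 hn hcn hc0 hct
    have hfM : ∀ x, f x ≤ M := fun x =>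
      le_trans (hfb x) (le_trans inf_le_left (hdM x z₀))
    have hfLip : ∀ x y, f x ≤ f y + d x y := fun x y =>
      le_trans (hflip x y) (add_le_add_right inf_le_left _)
    have hfmem : f ∈ {f : X → ℝ≥0∞ | (∀ x, f x ≤ M) ∧ ∀ x y, f x ≤ f y + d x y} :=
      ⟨hfM, hfLip⟩
    have ht1 : ∑' x, f x * μ x = ∑ x ∈ S, f x * μ x :=
      tsum_eq_sum fun x hx => by rw [hμS x hx, mul_zero]
    have ht2 : ∑' x, f x * ν x = ∑ x ∈ S, f x * ν x :=
      tsum_eq_sum fun x hx => by rw [hνS x hx, mul_zero]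
    refine le_trans hfval ?_
    calc (∑ x ∈ S, f x * μ x) - (∑ x ∈ S, f x * ν x)
        = (∑' x, f x * μ x) - (∑' x, f x * ν x) := by rw [ht1, ht2]
    _ ≤ ((∑' x, f x * μ x) - (∑' x, f x * ν x)) ⊔
          ((∑' x, f x * ν x) - (∑' x, f x * μ x)) := le_sup_left
    _ ≤ _ := le_iSup₂ (f := fun (f : X → ℝ≥0∞) (_ : f ∈ {f : X → ℝ≥0∞ |
          (∀ x, f x ≤ M) ∧ ∀ x y, f x ≤ f y + d x y}) =>
          ((∑' x, f x * μ x) - (∑' x, f x * ν x)) ⊔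
            ((∑' x, f x * ν x) - (∑' x, f x * μ x))) f hfmem
  · -- easy direction
    refine iSup₂_le fun f hf => le_iInf₂ fun σ hσ => ?_
    obtain ⟨hfM, hfLip⟩ := hf
    have ht1 : ∑' x, f x * μ x = ∑ x ∈ S, f x * μ x :=
      tsum_eq_sum fun x hx => by rw [hμS x hx, mul_zero]
    have ht2 : ∑' x, f x * ν x = ∑ x ∈ S, f x * ν x :=
      tsum_eq_sum fun x hx => by rw [hνS x hx, mul_zero]
    have hfst : ∑ p ∈ S ×ˢ S, f p.1 * σ p = ∑ x ∈ S, f x * μ x := by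
      rw [Finset.sum_product]
      refine Finset.sum_congr rfl fun x _ => ?_
      rw [← hσ.2.1 x, Finset.mul_sum]
    have hsnd : ∑ p ∈ S ×ˢ S, f p.2 * σ p = ∑ y ∈ S, f y * ν y := by
      rw [Finset.sum_product, Finset.sum_comm]
      refine Finset.sum_congr rfl fun y _ => ?_
      rw [← hσ.2.2 y, Finset.mul_sum]
    have key1 : (∑' x, f x * μ x) ≤ (∑' x, f x * ν x) + costFin S d σ := by
      rw [ht1, ht2, ← hfst, ← hsnd]
      calc ∑ p ∈ S ×ˢ S, f p.1 * σ p
          ≤ ∑ p ∈ S ×ˢ S, (f p.2 + d p.1 p.2) * σ p :=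
            Finset.sum_le_sum fun p _ => mul_le_mul_left (hfLip p.1 p.2) _
      _ = (∑ p ∈ S ×ˢ S, f p.2 * σ p) + costFin S d σ := by
          rw [costFin, ← Finset.sum_add_distrib]
          exact Finset.sum_congr rfl fun p _ => add_mul _ _ _
    have key2 : (∑' x, f x * ν x) ≤ (∑' x, f x * μ x) + costFin S d σ := by
      rw [ht1, ht2, ← hfst, ← hsnd]
      calc ∑ p ∈ S ×ˢ S, f p.2 * σ p
          ≤ ∑ p ∈ S ×ˢ S, (f p.1 + d p.1 p.2) * σ p := by
            refine Finset.sum_le_sum fun p _ => mul_le_mul_left ?_ _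
            rw [hsymm p.1 p.2]
            exact hfLip p.2 p.1
      _ = (∑ p ∈ S ×ˢ S, f p.1 * σ p) + costFin S d σ := by
          rw [costFin, ← Finset.sum_add_distrib]
          exact Finset.sum_congr rfl fun p _ => add_mul _ _ _
    exact sup_le (tsub_le_iff_left.2 key1) (tsub_le_iff_left.2 key2)
end

section
/- Let L and A be sets with A nonempty and |L| ≥ 2, V = 𝒫(L) the powerset quantale, and F = 𝒫(−)^{L×A} the Set endofunctor of conditional transition systems. Then there is NO well-behaved modality τ : 𝒫(𝒫(L))^{L×A} → 𝒫(L) such that the coupling-based lifting F↓_τ equals the lifting F̄ given by F̄(d)(T₁,T₂) = { l ∈ L | ∀a∈A, ∀(x,y) ∈ T₁(l,a)×T₂(l,a), ∃(x',y') ∈ T₁(l,a)×T₂(l,a), l ∈ d(x,y') and l ∈ d(x',y) }. -/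
universe u

open SetFunctor AffineQuantale

/-- The powerset quantale `𝒫(L)`, with `⊗ = ∩` and `⊤ = L`. -/
instance setQuantale (L : Type u) : AffineQuantale (Set L) where
  tensor S T := S ∩ T
  tensor_comm := Set.inter_comm
  tensor_assoc := Set.inter_assoc
  tensor_top := Set.inter_univ
  tensor_sSup S C := by
    ext l
    simp only [Set.sSup_eq_sUnion, Set.iSup_eq_iUnion, Set.mem_inter_iff, Set.mem_sUnion,
      Set.mem_iUnion]
    constructor
    · rintro ⟨hS, T, hT, hl⟩
      exact ⟨T, hT, hS, hl⟩
    · rintro ⟨T, hT, hS, hl⟩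
      exact ⟨hS, T, hT, hl⟩

/-- The `Set` endofunctor `𝒫(−)^{L×A}` of conditional transition systems. -/
def ctsF (L A : Type u) : SetFunctor.{u} where
  obj X := L × A → Set X
  map f T := fun p => f '' T p
  map_id T := by funext p; simp
  map_comp f g T := by funext p; simp [Set.image_image]

/-- If `A` is nonempty and `L` has at least two elements, then no
well-behaved modality `τ` makes the coupling-based lifting of `F = 𝒫(−)^{L×A}` equal to
the lifting `F̄` of conditional transition systems. -/
theorem cts_no_coupling (L A : Type u) (hA : Nonempty A)
    (hL : ∃ c₁ c₂ : L, c₁ ≠ c₂) :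
    ¬ ∃ τ : (ctsF L A).obj (Set L) → Set L,
        WellBehaved (ctsF L A) τ ∧
        ∀ {X : Type u} (d : X → X → Set L), IsPMet d → ∀ T₁ T₂ : (ctsF L A).obj X,
          couplingLift (ctsF L A) τ d T₁ T₂
            = {l : L | ∀ a : A, ∀ x ∈ T₁ (l, a), ∀ y ∈ T₂ (l, a),
                ∃ x' ∈ T₁ (l, a), ∃ y' ∈ T₂ (l, a), l ∈ d x y' ∧ l ∈ d x' y} := by
  
  rintro ⟨τ, _hwb, hcl⟩
  obtain ⟨a⟩ := hA
  obtain ⟨c₁, c₂, _hc⟩ := hL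
  have hd : IsPMet (fun _ _ : L => (Set.univ : Set L)) :=
    ⟨fun _ => rfl, fun _ _ => rfl, fun _ _ _ => le_top⟩
  have h := hcl (fun _ _ => Set.univ) hd (fun _ => (∅ : Set L)) (fun _ => ({c₁} : Set L))
  have hemp : couplings (ctsF L A) (fun _ => (∅ : Set L)) (fun _ => ({c₁} : Set L)) = ∅ := by
    ext t
    simp only [couplings, Set.mem_setOf_eq, Set.mem_empty_iff_false, iff_false, not_and]
    intro h1 h2
    have e1 : Prod.fst '' t (c₁, a) = (∅ : Set L) := congrFun h1 (c₁, a)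
    have e2 : Prod.snd '' t (c₁, a) = ({c₁} : Set L) := congrFun h2 (c₁, a)
    have ht : t (c₁, a) = ∅ := by
      rwa [Set.image_eq_empty] at e1
    rw [ht] at e2
    simp at e2
  have hlift : couplingLift (ctsF L A) τ (fun _ _ : L => (Set.univ : Set L))
      (fun _ => (∅ : Set L)) (fun _ => ({c₁} : Set L)) = (∅ : Set L) := by
    unfold couplingLift
    rw [hemp]
    simp
  rw [hlift] at h
  have : c₁ ∈ ({l : L | ∀ a : A, ∀ x ∈ (∅ : Set L), ∀ y ∈ ({c₁} : Set L),
      ∃ x' ∈ (∅ : Set L), ∃ y' ∈ ({c₁} : Set L), l ∈ (Set.univ : Set L) ∧ l ∈ (Set.univ : Set L)}) := by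
    intro _ x hx
    exact absurd hx (Set.notMem_empty x)
  rw [← h] at this
  exact Set.notMem_empty c₁ this
end
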